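/- arXiv:1806.01636 — 3 statements merged into one kernel-verified Lean document; each statement's English description precedes it below -/
import Mathlib

section
/- (In classical logic.) Let 𝒱 be a fann. Then there is a natural morphism f from natural Cantor space 𝒞 to 𝒱 that is surjective up to equivalence: for every point x of 𝒱 there is a point p of 𝒞 with f(p) ≡ x. -/
/-! # Natural Topology: basic framework (Waaldijk) -/

/-- A pre-natural space: a countable set of basic dots with a decidable
pre-apartness `apart` and a decidable refinement partial order `refines`. -/
structure PreNaturalSpace (V : Type) : Type where
  countable' : Countable V
  apart : V → V → Prop
  refines : V → V → Prop
  apart_dec : DecidableRel apart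
  refines_dec : DecidableRel refines
  apart_symm : ∀ a b, apart a b → apart b a
  apart_irrefl : ∀ a, ¬ apart a a
  apart_mono : ∀ a b c, refines a b → apart c b → apart c a
  refines_refl : ∀ a, refines a a
  refines_trans : ∀ a b c, refines a b → refines b c → refines a c
  refines_antisymm : ∀ a b, refines a b → refines b a → a = b

namespace PreNaturalSpace

variable {V W : Type}

/-- `a ≺ b` : strict refinement. -/
def strict (P : PreNaturalSpace V) (a b : V) : Prop := P.refines a b ∧ a ≠ b

/-- A point is a shrinking sequence of dots deciding every apart pair of dots. -/
structure IsPoint (P : PreNaturalSpace V) (p : ℕ → V) : Prop where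
  mono : ∀ n, P.refines (p (n + 1)) (p n)
  shrink : ∀ n, ∃ m, P.strict (p m) (p n)
  decides : ∀ a b, P.apart a b → ∃ m, P.apart (p m) a ∨ P.apart (p m) b

/-- The set of points of a pre-natural space. -/
def Pt (P : PreNaturalSpace V) : Type := { p : ℕ → V // P.IsPoint p }

/-- `p` begins with the dot `a` : some `p m ≺ a`. -/
def begins (P : PreNaturalSpace V) (p : ℕ → V) (a : V) : Prop := ∃ m, P.strict (p m) a

/-- Apartness between a dot and a point. -/
def dApart (P : PreNaturalSpace V) (a : V) (p : ℕ → V) : Prop := ∃ m, P.apart (p m) a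

/-- Apartness between points. -/
def pApart (P : PreNaturalSpace V) (p q : P.Pt) : Prop := ∃ n, P.apart (p.1 n) (q.1 n)

/-- Equivalence of points: the negation of apartness. -/
def pEquiv (P : PreNaturalSpace V) (p q : P.Pt) : Prop := ¬ P.pApart p q

variable (P : PreNaturalSpace V)

lemma refines_of_le {p : ℕ → V} (hp : ∀ n, P.refines (p (n + 1)) (p n)) :
    ∀ {m k : ℕ}, m ≤ k → P.refines (p k) (p m) := by
  intro m k h
  induction h with
  | refl => exact P.refines_refl _
  | step h ih => exact P.refines_trans _ _ _ (hp _) ih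

lemma begins_mono {z : ℕ → V} (hz : P.IsPoint z) {a b : V} (hab : P.refines a b)
    (h : P.begins z a) : P.begins z b := by
  obtain ⟨j, hj1, hj2⟩ := h
  have hzb : P.refines (z j) b := P.refines_trans _ _ _ hj1 hab
  by_cases he : z j = b
  · obtain ⟨i, hi1, hi2⟩ := hz.shrink j
    exact ⟨i, P.refines_trans _ _ _ hi1 hzb, fun h' => hi2 (h'.trans he.symm)⟩
  · exact ⟨j, hzb, he⟩

/-- The natural (apartness) topology as a predicate on subsets of the point set. -/
def NatOpen (U : Set P.Pt) : Prop :=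
  ∀ x ∈ U, ∀ y : P.Pt, P.pApart y x ∨ ∃ m, { z : P.Pt | P.begins z.1 (y.1 m) } ⊆ U

instance instTopPt : TopologicalSpace P.Pt where
  IsOpen := P.NatOpen
  isOpen_univ := fun _ _ _ => Or.inr ⟨0, fun _ _ => trivial⟩
  isOpen_inter := by
    intro U U' hU hU' x hx y
    rcases hU x hx.1 y with h | ⟨m, hm⟩
    · exact Or.inl h
    rcases hU' x hx.2 y with h | ⟨k, hk⟩
    · exact Or.inl h
    refine Or.inr ⟨max m k, fun z hz => ⟨hm ?_, hk ?_⟩⟩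
    · exact P.begins_mono z.2 (P.refines_of_le y.2.mono (le_max_left m k)) hz
    · exact P.begins_mono z.2 (P.refines_of_le y.2.mono (le_max_right m k)) hz
  isOpen_sUnion := by
    intro S hS x hx y
    obtain ⟨U, hU, hxU⟩ := hx
    rcases hS U hU x hxU y with h | ⟨m, hm⟩
    · exact Or.inl h
    · exact Or.inr ⟨m, fun z hz => ⟨U, hU, hm hz⟩⟩

lemma pEquiv_refl (p : P.Pt) : P.pEquiv p p := fun ⟨_, h⟩ => P.apart_irrefl _ h

lemma pEquiv_symm {p q : P.Pt} (h : P.pEquiv p q) : P.pEquiv q p :=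
  fun ⟨n, hn⟩ => h ⟨n, P.apart_symm _ _ hn⟩

lemma pEquiv_trans {p q r : P.Pt} (hpq : P.pEquiv p q) (hqr : P.pEquiv q r) :
    P.pEquiv p r := by
  rintro ⟨n, hn⟩
  obtain ⟨m, hm⟩ := q.2.decides (p.1 n) (r.1 n) hn
  rcases hm with hm | hm
  · -- q.1 m apart from p.1 n
    refine hpq ⟨max m n, ?_⟩
    have h1 : P.apart (p.1 n) (q.1 (max m n)) :=
      P.apart_mono _ _ _ (P.refines_of_le q.2.mono (le_max_left m n)) (P.apart_symm _ _ hm)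
    have h2 : P.apart (q.1 (max m n)) (p.1 (max m n)) :=
      P.apart_mono _ _ _ (P.refines_of_le p.2.mono (le_max_right m n)) (P.apart_symm _ _ h1)
    exact P.apart_symm _ _ h2
  · refine hqr ⟨max m n, ?_⟩
    have h1 : P.apart (r.1 n) (q.1 (max m n)) :=
      P.apart_mono _ _ _ (P.refines_of_le q.2.mono (le_max_left m n)) (P.apart_symm _ _ hm)
    exact P.apart_mono _ _ _ (P.refines_of_le r.2.mono (le_max_right m n))
      (P.apart_symm _ _ h1)

/-- The setoid of points modulo `≡`. -/
def ptSetoid : Setoid P.Pt :=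
  ⟨P.pEquiv, ⟨P.pEquiv_refl, P.pEquiv_symm, P.pEquiv_trans⟩⟩

/-- `â` : the set of points beginning with the dot `a`. -/
def hatSet (a : V) : Set P.Pt := { p | P.begins p.1 a }

/-- `ā` : the `≡`-closure of `â`. -/
def barSet (a : V) : Set P.Pt := { p | ∃ q : P.Pt, P.begins q.1 a ∧ P.pEquiv p q }

/-- A natural space is basic-open when every `ā` is open. -/
def BasicOpen : Prop := ∀ a : V, IsOpen (P.barSet a)

/-- Existence of a maximal dot. -/
def HasMaxDot : Prop := ∃ m, ∀ a, P.refines a m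

/-- Every basic dot begins at least one point. -/
def AllDotsInhabited : Prop := ∀ a : V, ∃ p : ℕ → V, P.IsPoint p ∧ P.begins p a

/-- The conditions making the point set of a pre-natural space a natural space. -/
def IsNaturalSpace : Prop := P.HasMaxDot ∧ P.AllDotsInhabited

end PreNaturalSpace

/-- A refinement morphism between (pre-)natural spaces: a map on dots sending
points to points and reflecting apartness of points. -/
structure RefMorphism {V W : Type} (P : PreNaturalSpace V) (Q : PreNaturalSpace W) : Type where
  toFun : V → W
  maps_points : ∀ p : ℕ → V, P.IsPoint p → Q.IsPoint (fun n => toFun (p n))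
  reflects_apart : ∀ p q : ℕ → V, P.IsPoint p → P.IsPoint q →
    (∃ n, Q.apart (toFun (p n)) (toFun (q n))) → ∃ n, P.apart (p n) (q n)

/-- The induced map on points of a refinement morphism. -/
def RefMorphism.pointMap {V W : Type} {P : PreNaturalSpace V} {Q : PreNaturalSpace W}
    (f : RefMorphism P Q) (p : P.Pt) : Q.Pt :=
  ⟨fun n => f.toFun (p.1 n), f.maps_points p.1 p.2⟩

namespace PreNaturalSpace

variable {V W : Type} (P : PreNaturalSpace V)

/-- Restriction of a pre-natural space to a subset of dots. -/
noncomputable def restrict (S : Set V) : PreNaturalSpace S where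
  countable' := by haveI := P.countable'; exact inferInstance
  apart a b := P.apart a.1 b.1
  refines a b := P.refines a.1 b.1
  apart_dec := Classical.decRel _
  refines_dec := Classical.decRel _
  apart_symm _ _ h := P.apart_symm _ _ h
  apart_irrefl a := P.apart_irrefl a.1
  apart_mono _ _ _ h1 h2 := P.apart_mono _ _ _ h1 h2
  refines_refl a := P.refines_refl a.1
  refines_trans _ _ _ h1 h2 := P.refines_trans _ _ _ h1 h2
  refines_antisymm _ _ h1 h2 := Subtype.ext (P.refines_antisymm _ _ h1 h2)

/-! ## Trail spaces -/

/-- A `≺`-trail: a finite strictly refining sequence `a₀ ≻ a₁ ≻ …`. -/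
def Trail : Type := { l : List V // l.Chain' fun a b => P.strict b a }

lemma strict_trans_flip : Transitive (fun a b : V => P.strict b a) := by
  rintro a b c ⟨h1, h1'⟩ ⟨h2, h2'⟩
  refine ⟨P.refines_trans _ _ _ h2 h1, fun he => ?_⟩
  exact h2' (P.refines_antisymm _ _ h2 (he ▸ h1))

lemma last_refines_of_prefix {a b : List V}
    (ha : a.Chain' fun x y => P.strict y x) (hpre : b <+: a)
    {x y : V} (hx : x ∈ a.getLast?) (hy : y ∈ b.getLast?) :
    P.refines x y := by
  haveI : IsTrans V (fun x y : V => P.strict y x) := ⟨fun _ _ _ h1 h2 => P.strict_trans_flip h1 h2⟩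
  have hpw : a.Pairwise fun x y => P.strict y x := List.isChain_iff_pairwise.mp ha
  obtain ⟨t, rfl⟩ := hpre
  rcases eq_or_ne t [] with rfl | ht
  · rw [List.append_nil] at hx
    have : x = y := by
      rw [Option.mem_def] at hx hy
      exact Option.some_injective _ (hx ▸ hy ▸ rfl)
    exact this ▸ P.refines_refl x
  · rw [List.getLast?_append_of_ne_nil _ ht] at hx
    have hxt : x ∈ t := List.mem_of_mem_getLast? hx
    have hyb : y ∈ b := List.mem_of_mem_getLast? hy
    have := (List.pairwise_append.mp hpw).2.2 y hyb x hxt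
    exact this.1

/-- The trail space of a pre-natural space: dots are `≺`-trails, with
`a ⊑* b` iff `b` is an initial segment of `a`, and `a #* b` iff the last
dots of `a` and `b` are apart. -/
noncomputable def trailSpace : PreNaturalSpace P.Trail where
  countable' := by haveI := P.countable'; exact inferInstanceAs (Countable
    { l : List V // l.Chain' fun a b => P.strict b a })
  apart a b := ∃ x ∈ a.1.getLast?, ∃ y ∈ b.1.getLast?, P.apart x y
  refines a b := b.1 <+: a.1
  apart_dec := Classical.decRel _
  refines_dec := Classical.decRel _
  apart_symm := by
    rintro a b ⟨x, hx, y, hy, hxy⟩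
    exact ⟨y, hy, x, hx, P.apart_symm _ _ hxy⟩
  apart_irrefl := by
    rintro a ⟨x, hx, y, hy, hxy⟩
    rw [Option.mem_def] at hx hy
    have : x = y := Option.some_injective _ (hx ▸ hy ▸ rfl)
    exact P.apart_irrefl x (this ▸ hxy)
  apart_mono := by
    rintro a b c hab ⟨x, hx, y, hy, hxy⟩
    have hbne : b.1 ≠ [] := by
      intro h
      rw [h] at hy
      simp at hy
    have hane : a.1 ≠ [] := by
      intro h
      exact hbne (List.prefix_nil.mp (h ▸ hab))
    obtain ⟨z, hz⟩ : ∃ z, z ∈ a.1.getLast? := by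
      rcases h : a.1.getLast? with _ | z
      · exact absurd (List.getLast?_eq_none_iff.mp h) hane
      · exact ⟨z, rfl⟩
    have hzy : P.refines z y := P.last_refines_of_prefix a.2 hab hz hy
    exact ⟨x, hx, z, hz, P.apart_mono _ _ _ hzy hxy⟩
  refines_refl a := List.prefix_refl a.1
  refines_trans _ _ _ h1 h2 := h2.trans h1
  refines_antisymm a b h1 h2 :=
    Subtype.ext (h2.eq_of_length (le_antisymm h2.length_le h1.length_le))

end PreNaturalSpace

open Classical in
/-- `p♯(n)` : the `≺`-trail obtained from `p₀, …, p_{n-1}` by deleting repetitions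
(for a shrinking sequence `p`, repetitions are consecutive). -/
noncomputable def segList {V : Type} (p : ℕ → V) : ℕ → List V
  | 0 => []
  | n + 1 =>
    if (segList p n).getLast? = some (p n) then segList p n
    else segList p n ++ [p n]

namespace PreNaturalSpace

variable {V W : Type} (P : PreNaturalSpace V)

/-- The map on trail dots sending a nonempty trail to its last element and
the empty trail to `m`. -/
def lastDot (m : V) (q : P.Trail) : V := q.1.getLast?.getD m

/-- `g` is the point map induced by a trail morphism `f` (a refinement morphism
on the trail space): `g p = f (p♯(0)), f (p♯(1)), …`. -/
def InducedByTrailMorphism (Q : PreNaturalSpace W) (f : RefMorphism P.trailSpace Q)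
    (g : P.Pt → Q.Pt) : Prop :=
  ∀ p : P.Pt, ∃ t : P.trailSpace.Pt, (∀ n, (t.1 n).1 = segList p.1 n) ∧ g p = f.pointMap t

/-- `g` is a natural morphism map: induced by a refinement morphism or by a trail morphism. -/
def IsNaturalMorphismMap (Q : PreNaturalSpace W) (g : P.Pt → Q.Pt) : Prop :=
  (∃ f : RefMorphism P Q, ∀ p, g p = f.pointMap p) ∨
  (∃ f : RefMorphism P.trailSpace Q, P.InducedByTrailMorphism Q f g)

/-- Two natural spaces are isomorphic: natural morphisms both ways, inverse up to `≡`. -/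
def AreIsomorphic (Q : PreNaturalSpace W) : Prop :=
  ∃ (f : P.Pt → Q.Pt) (g : Q.Pt → P.Pt),
    P.IsNaturalMorphismMap Q f ∧ Q.IsNaturalMorphismMap P g ∧
    (∀ x, P.pEquiv (g (f x)) x) ∧ (∀ y, Q.pEquiv (f (g y)) y)

/-- A natural space is a basic neighborhood space iff it is isomorphic to a basic-open space. -/
def IsBasicNbhdSpace : Prop :=
  ∃ (W' : Type) (Q : PreNaturalSpace W'), Q.IsNaturalSpace ∧ Q.BasicOpen ∧ P.AreIsomorphic Q

/-! ## Trees, treas, spreads, spraids, fans -/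

/-- `a` is a successor of `c`. -/
def IsSucc (a c : V) : Prop := P.strict a c ∧ ∀ b, P.strict a b → P.refines b c → b = c

/-- A successor-trail (as a list, each entry a successor of the previous one). -/
def SuccChain (l : List V) : Prop := l.Chain' fun x y => P.IsSucc y x

/-- A successor-trail from `m` to `a`. -/
def IsSuccTrailFromTo (m a : V) (l : List V) : Prop :=
  P.SuccChain l ∧ l.head? = some m ∧ l.getLast? = some a

/-- `(V,⊑)` is a tree. -/
def IsTree : Prop :=
  ∃ m, (∀ a, P.refines a m) ∧ ∀ a, ∃! l : List V, P.IsSuccTrailFromTo m a l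

/-- `(V,⊑)` is a trea. -/
def IsTrea : Prop :=
  ∃ m, (∀ a, P.refines a m) ∧ (∀ a, { b | P.refines a b }.Finite) ∧
    ∀ a, ∃ g : ℕ, ∀ l : List V, P.IsSuccTrailFromTo m a l → l.length = g

/-- Every infinite successor-trail is a point. -/
def SuccTrailsArePoints : Prop :=
  ∀ q : ℕ → V, (∀ n, P.IsSucc (q (n + 1)) (q n)) → P.IsPoint q

def IsSpread : Prop := P.IsTree ∧ P.SuccTrailsArePoints

def IsSpraid : Prop := P.IsTrea ∧ P.SuccTrailsArePoints

/-- Finitely branching: every dot has finitely many successors. -/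
def FinBranching : Prop := ∀ a : V, { b | P.IsSucc b a }.Finite

def IsFan : Prop := P.IsSpread ∧ P.FinBranching

def IsFann : Prop := P.IsSpraid ∧ P.FinBranching

end PreNaturalSpace
/-! ## Natural Baire space and natural Cantor space -/

/-- Natural Baire space: dots are finite sequences of naturals, `b ⊑ a` iff
`a` is an initial segment of `b`, apart iff incomparable. -/
noncomputable def BairePre : PreNaturalSpace (List ℕ) where
  countable' := inferInstance
  apart a b := ¬ a <+: b ∧ ¬ b <+: a
  refines a b := b <+: a
  apart_dec := Classical.decRel _
  refines_dec := Classical.decRel _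
  apart_symm _ _ h := ⟨h.2, h.1⟩
  apart_irrefl a h := h.1 (List.prefix_refl a)
  apart_mono := by
    intro a b c hab hcb
    constructor
    · intro hca
      rcases List.prefix_or_prefix_of_prefix hca hab with h | h
      · exact hcb.1 h
      · exact hcb.2 h
    · intro hac
      exact hcb.2 (hab.trans hac)
  refines_refl a := List.prefix_refl a
  refines_trans _ _ _ h1 h2 := h2.trans h1
  refines_antisymm _ _ h1 h2 := h2.eq_of_length (le_antisymm h2.length_le h1.length_le)

/-- Natural Cantor space: the restriction of natural Baire space to finite 0-1 sequences. -/
noncomputable def CantorPre : PreNaturalSpace ({ l : List ℕ | ∀ x ∈ l, x ≤ 1 }) :=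
  BairePre.restrict { l : List ℕ | ∀ x ∈ l, x ≤ 1 }

/-- The sequence of initial segments of `α ∈ ℕ^ℕ`. -/
def initSegs (α : ℕ → ℕ) (n : ℕ) : List ℕ := (List.range n).map α

/-! A fann has only finitely many dots above any dot, so whenever `b ≺ a` some successor of `a`
lies above `b`; in particular every dot has finitely many, and at least one, successors. List them
and decode a 0-1 word by an automaton whose state is a dot `a` together with the successors of `a`
still in play: the digit `0` descends to the first of them, the digit `1` discards it. Along any
infinite 0-1 sequence the dot moves, always to a successor, after at most as many digits as there
are candidates, so deleting repetitions yields a successor-trail and hence a point; comparable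
words decode to comparable dots, so decoding is a refinement morphism from natural Cantor space.
Given a point `x`, pick at each dot above some `x n` a successor still above some `x n`, and choose
the digits that steer the automaton along these choices: every decoded dot then lies above some
`x n`, so the image is `≡ x`. -/

namespace PreNaturalSpace

variable {V : Type} (P : PreNaturalSpace V)

lemma not_apart_of_refines {a b : V} (h : P.refines a b) : ¬ P.apart a b :=
  fun hab => P.apart_irrefl a (P.apart_mono a b a h hab)

lemma not_apart_of_common_refinement {a b c : V} (ha : P.refines c a) (hb : P.refines c b) :
    ¬ P.apart a b :=
  fun hab => P.not_apart_of_refines ha (P.apart_symm _ _ (P.apart_mono c b a hb hab))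

lemma apart_of_refines_of_apart {a b c : V} (hab : P.refines a b) (hbc : P.apart b c) :
    P.apart a c :=
  P.apart_symm _ _ (P.apart_mono a b c hab (P.apart_symm _ _ hbc))

lemma strict_of_refines_of_strict {a b c : V} (hcb : P.refines c b) (hba : P.strict b a) :
    P.strict c a :=
  ⟨P.refines_trans _ _ _ hcb hba.1, by
    rintro rfl
    exact hba.2 (P.refines_antisymm _ _ hba.1 hcb)⟩

lemma strict_of_strict_of_refines {a b c : V} (hcb : P.strict c b) (hba : P.refines b a) :
    P.strict c a :=
  ⟨P.refines_trans _ _ _ hcb.1 hba, by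
    rintro rfl
    exact hcb.2 (P.refines_antisymm _ _ hcb.1 hba)⟩

/-- A maximal `c` with `b ⊑ c ≺ a` is a successor of `a`; it exists because the dots above `b`
are finitely many. -/
lemma exists_isSucc_between (hfin : ∀ a, { b | P.refines a b }.Finite) {a b : V}
    (hba : P.strict b a) : ∃ c, P.IsSucc c a ∧ P.refines b c := by
  let _ : PartialOrder V :=
    { le := P.refines, le_refl := P.refines_refl, le_trans := P.refines_trans,
      le_antisymm := P.refines_antisymm }
  have hs : { c | P.refines b c ∧ P.strict c a }.Finite := (hfin b).subset fun c hc => hc.1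
  obtain ⟨c, hbc, hmax⟩ := hs.exists_le_maximal ⟨P.refines_refl b, hba⟩
  refine ⟨c, ⟨hmax.prop.2, fun d hcd hda => ?_⟩, hbc⟩
  by_contra hne
  exact hcd.2 (P.refines_antisymm _ _ hcd.1
    (hmax.2 ⟨P.refines_trans _ _ _ hbc hcd.1, hda, hne⟩ hcd.1))

lemma exists_isSucc (hfin : ∀ a, { b | P.refines a b }.Finite) (hinh : P.AllDotsInhabited)
    (a : V) : ∃ b, P.IsSucc b a := by
  obtain ⟨_, _, j, hj⟩ := hinh a
  obtain ⟨b, hb, -⟩ := P.exists_isSucc_between hfin hj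
  exact ⟨b, hb⟩

variable {P}

lemma IsPoint.refines {p : ℕ → V} (hp : P.IsPoint p) {m k : ℕ} (h : m ≤ k) :
    P.refines (p k) (p m) :=
  P.refines_of_le hp.mono h

lemma IsPoint.comp {p : ℕ → V} (hp : P.IsPoint p) {φ : ℕ → ℕ} (hφ : Monotone φ)
    (hφ_unbounded : ∀ k, ∃ n, k ≤ φ n) : P.IsPoint (p ∘ φ) where
  mono n := hp.refines (hφ n.le_succ)
  shrink n := by
    obtain ⟨m, hm⟩ := hp.shrink (φ n)
    obtain ⟨n', hn'⟩ := hφ_unbounded m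
    exact ⟨n', P.strict_of_refines_of_strict (hp.refines hn') hm⟩
  decides a b hab := by
    obtain ⟨m, hm⟩ := hp.decides a b hab
    obtain ⟨n', hn'⟩ := hφ_unbounded m
    exact ⟨n', hm.imp (P.apart_of_refines_of_apart (hp.refines hn'))
      (P.apart_of_refines_of_apart (hp.refines hn'))⟩

lemma pEquiv_of_forall_exists_refines (p q : P.Pt) (h : ∀ j, ∃ k, P.refines (q.1 k) (p.1 j)) :
    P.pEquiv p q := by
  rintro ⟨n, hn⟩
  obtain ⟨k, hk⟩ := h n
  exact P.not_apart_of_common_refinement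
    (P.refines_trans _ _ _ (q.2.refines (le_max_left k n)) hk)
    (q.2.refines (le_max_right k n)) hn

lemma isPoint_restrict {S : Set V} {p : ℕ → S} (hp : P.IsPoint fun n => (p n).1) :
    (P.restrict S).IsPoint p where
  mono := hp.mono
  shrink n := by
    obtain ⟨m, hm, hne⟩ := hp.shrink n
    exact ⟨m, hm, fun h => hne (congrArg Subtype.val h)⟩
  decides a b hab := hp.decides a b hab

section Stutter

variable {d : ℕ → V} (hstep : ∀ k, d (k + 1) = d k ∨ P.IsSucc (d (k + 1)) (d k))
  (hprog : ∀ k, ∃ k', k < k' ∧ d k' ≠ d k)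
include hstep hprog

/-- The first change of value after `k` is a step to a successor of `d k`. -/
lemma exists_isSucc_of_stutter (k : ℕ) : ∃ k', P.IsSucc (d k') (d k) := by
  classical
  obtain ⟨hlt, hne⟩ := Nat.find_spec (hprog k)
  have hprev : d (Nat.find (hprog k) - 1) = d k := by
    rcases (Nat.le_sub_one_of_lt hlt).eq_or_lt with heq | hlt'
    · rw [← heq]
    · by_contra h
      exact Nat.find_min (hprog k) (by omega : Nat.find (hprog k) - 1 < _) ⟨hlt', h⟩
  have hsucc := hstep (Nat.find (hprog k) - 1)
  rw [Nat.sub_add_cancel (by omega), hprev] at hsucc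
  exact ⟨_, hsucc.resolve_left hne⟩

/-- Deleting the repetitions from `d` leaves a successor-trail, which is a point. -/
lemma isPoint_of_stutter (hP : P.SuccTrailsArePoints) : P.IsPoint d := by
  have hmono : ∀ k, P.refines (d (k + 1)) (d k) := fun k =>
    (hstep k).elim (fun h => h ▸ P.refines_refl _) fun h => h.1.1
  refine ⟨hmono, fun k => ?_, fun a b hab => ?_⟩
  · obtain ⟨k', hlt, hne⟩ := hprog k
    exact ⟨k', P.refines_of_le hmono hlt.le, hne⟩
  · choose next hnext using exists_isSucc_of_stutter hstep hprog
    have hz : P.IsPoint fun j => d (next^[j] 0) := hP _ fun j => by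
      rw [Function.iterate_succ_apply']
      exact hnext _
    obtain ⟨j, hj⟩ := hz.decides a b hab
    exact ⟨_, hj⟩

end Stutter

end PreNaturalSpace

lemma initSegs_length (α : ℕ → ℕ) (n : ℕ) : (initSegs α n).length = n := by
  simp [initSegs]

lemma initSegs_add (α : ℕ → ℕ) (k n : ℕ) :
    initSegs α (k + n) = initSegs α k ++ initSegs (fun i => α (k + i)) n := by
  simp [initSegs, List.range_add, Function.comp_def]

lemma initSegs_prefix (α : ℕ → ℕ) {k n : ℕ} (h : k ≤ n) : initSegs α k <+: initSegs α n := by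
  obtain ⟨j, rfl⟩ := Nat.exists_eq_add_of_le h
  rw [initSegs_add]
  exact List.prefix_append _ _

lemma exists_eq_initSegs {l : ℕ → List ℕ} (hl : ∀ {m n}, m ≤ n → l m <+: l n)
    (hlen : ∀ k, ∃ n, k < (l n).length) : ∃ α : ℕ → ℕ, ∀ n, l n = initSegs α (l n).length := by
  choose N hN using hlen
  refine ⟨fun k => (l (N k))[k]'(hN k), fun n =>
    List.ext_getElem (initSegs_length _ _).symm fun k hk _ => ?_⟩
  simp only [initSegs, List.getElem_map, List.getElem_range]
  rcases le_total n (N k) with h | h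
  · exact (hl h).getElem hk
  · exact ((hl h).getElem (hN k)).symm

lemma prefix_of_not_bairePre_apart {a b : List ℕ} (h : ¬ BairePre.apart a b)
    (hlen : a.length ≤ b.length) : a <+: b := by
  by_contra hab
  exact h ⟨hab, fun hba => hab (hba.eq_of_length (le_antisymm hba.length_le hlen) ▸ hba)⟩

lemma bairePre_isPoint_initSegs (α : ℕ → ℕ) : BairePre.IsPoint (initSegs α) where
  mono n := initSegs_prefix α n.le_succ
  shrink n := ⟨n + 1, initSegs_prefix α n.le_succ, fun h => by
    simpa [initSegs_length] using congrArg List.length h⟩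
  decides a b hab := by
    by_contra! h
    obtain ⟨ha, hb⟩ := h (a.length + b.length)
    have ha' := prefix_of_not_bairePre_apart (fun h' => ha (BairePre.apart_symm _ _ h'))
      (by rw [initSegs_length]; omega)
    have hb' := prefix_of_not_bairePre_apart (fun h' => hb (BairePre.apart_symm _ _ h'))
      (by rw [initSegs_length]; omega)
    rcases List.prefix_or_prefix_of_prefix ha' hb' with h' | h'
    exacts [hab.1 h', hab.2 h']

def cantorPoint (α : ℕ → ℕ) (hα : ∀ k, α k ≤ 1) : CantorPre.Pt :=
  ⟨fun n => ⟨initSegs α n, by simpa [initSegs] using fun k _ => hα k⟩,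
    PreNaturalSpace.isPoint_restrict (bairePre_isPoint_initSegs α)⟩

lemma cantor_length_lt_of_strict {a b : ({ l : List ℕ | ∀ x ∈ l, x ≤ 1 } : Set (List ℕ))}
    (h : CantorPre.strict a b) : b.1.length < a.1.length :=
  lt_of_le_of_ne h.1.length_le fun he => h.2 (Subtype.ext (h.1.eq_of_length he).symm)

lemma cantor_length_unbounded {p : ℕ → ({ l : List ℕ | ∀ x ∈ l, x ≤ 1 } : Set (List ℕ))}
    (hp : CantorPre.IsPoint p) (k : ℕ) : ∃ n, k ≤ (p n).1.length := by
  induction k with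
  | zero => exact ⟨0, Nat.zero_le _⟩
  | succ k ih =>
    obtain ⟨n, hn⟩ := ih
    obtain ⟨n', hn'⟩ := hp.shrink n
    exact ⟨n', by have := cantor_length_lt_of_strict hn'; omega⟩

namespace PreNaturalSpace

variable {V : Type} {P : PreNaturalSpace V}

section Decoding

variable (P) in
def IsCandidateState (s : V × List V) : Prop := s.2 ≠ [] ∧ ∀ b ∈ s.2, P.IsSucc b s.1

variable (child : V → List V)

def step : V × List V → ℕ → V × List V
  | (a, b :: L), i => if i = 0 ∨ L = [] then (b, child b) else (a, L)
  | (a, []), _ => (a, [])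

def decode (m : V) (w : List ℕ) : V × List V := w.foldl (step child) (m, child m)

lemma decode_initSegs_add (m : V) (α : ℕ → ℕ) (k n : ℕ) :
    decode child m (initSegs α (k + n)) =
      (initSegs (fun i => α (k + i)) n).foldl (step child) (decode child m (initSegs α k)) := by
  rw [decode, initSegs_add, List.foldl_append, decode]

lemma decode_initSegs_succ (m : V) (α : ℕ → ℕ) (k : ℕ) :
    decode child m (initSegs α (k + 1)) = step child (decode child m (initSegs α k)) (α k) := by
  rw [decode_initSegs_add]
  rfl

open Classical in
noncomputable def steerDigit (g : V → V) (s : V × List V) : ℕ :=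
  if s.2.head? = some (g s.1) then 0 else 1

lemma step_steerDigit (g : V → V) {s : V × List V} (h : g s.1 ∈ s.2) :
    step child s (steerDigit g s) = (g s.1, child (g s.1)) ∨
      (step child s (steerDigit g s)).1 = s.1 ∧ g s.1 ∈ (step child s (steerDigit g s)).2 := by
  obtain ⟨a, _ | ⟨b, L⟩⟩ := s
  · simp at h
  · by_cases hb : b = g a
    · subst hb
      simp [step, steerDigit]
    · have hL : g a ∈ L := (List.mem_cons.1 h).resolve_left (Ne.symm hb)
      simp [step, steerDigit, hb, List.ne_nil_of_mem hL, hL]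

variable {child}

lemma step_eq_or_isSucc {s : V × List V} (hs : P.IsCandidateState s) (i : ℕ) :
    (step child s i).1 = s.1 ∨ P.IsSucc (step child s i).1 s.1 := by
  obtain ⟨a, _ | ⟨b, L⟩⟩ := s
  · exact absurd rfl hs.1
  · simp only [step]
    split_ifs
    · exact Or.inr (hs.2 b List.mem_cons_self)
    · exact Or.inl rfl

lemma length_step_lt {s : V × List V} (hs : P.IsCandidateState s) (i : ℕ)
    (h : (step child s i).1 = s.1) : (step child s i).2.length < s.2.length := by
  obtain ⟨a, _ | ⟨b, L⟩⟩ := s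
  · exact absurd rfl hs.1
  · simp only [step] at h ⊢
    split_ifs at h ⊢
    · exact absurd h (hs.2 b List.mem_cons_self).1.2
    · simp

variable (hchild : ∀ a, P.IsCandidateState (a, child a))
include hchild

lemma isCandidateState_step {s : V × List V} (hs : P.IsCandidateState s) (i : ℕ) :
    P.IsCandidateState (step child s i) := by
  obtain ⟨a, _ | ⟨b, L⟩⟩ := s
  · exact absurd rfl hs.1
  · simp only [step]
    split_ifs with h
    · exact hchild b
    · exact ⟨(not_or.1 h).2, fun c hc => hs.2 c (List.mem_cons_of_mem b hc)⟩

lemma isCandidateState_foldl {s : V × List V} (hs : P.IsCandidateState s) (w : List ℕ) :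
    P.IsCandidateState (w.foldl (step child) s) := by
  induction w generalizing s with
  | nil => exact hs
  | cons i w ih => exact ih (isCandidateState_step hchild hs i)

lemma refines_foldl {s : V × List V} (hs : P.IsCandidateState s) (w : List ℕ) :
    P.refines (w.foldl (step child) s).1 s.1 := by
  induction w generalizing s with
  | nil => exact P.refines_refl _
  | cons i w ih =>
    refine P.refines_trans _ _ _ (ih (isCandidateState_step hchild hs i)) ?_
    rcases step_eq_or_isSucc hs i with h | h
    · exact h ▸ P.refines_refl _
    · exact h.1.1

/-- Each digit that keeps the dot shortens the list of candidates, so after as many digits as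
there are candidates the dot has moved. -/
lemma strict_foldl {s : V × List V} (hs : P.IsCandidateState s) {w : List ℕ}
    (hw : s.2.length ≤ w.length) : P.strict (w.foldl (step child) s).1 s.1 := by
  induction w generalizing s with
  | nil => exact absurd (List.length_eq_zero_iff.1 (Nat.le_zero.1 hw)) hs.1
  | cons i w ih =>
    rcases step_eq_or_isSucc hs i with h | h
    · have hlt := length_step_lt hs i h
      rw [List.foldl_cons, ← h]
      exact ih (isCandidateState_step hchild hs i) (by simp at hw; omega)
    · exact P.strict_of_refines_of_strict
        (refines_foldl hchild (isCandidateState_step hchild hs i) w) h.1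

lemma refines_decode_of_prefix (m : V) {w w' : List ℕ} (h : w <+: w') :
    P.refines (decode child m w').1 (decode child m w).1 := by
  obtain ⟨u, rfl⟩ := h
  rw [decode, List.foldl_append]
  exact refines_foldl hchild (isCandidateState_foldl hchild (hchild m) w) u

lemma isPoint_decode (hP : P.SuccTrailsArePoints) (m : V) (α : ℕ → ℕ) :
    P.IsPoint fun k => (decode child m (initSegs α k)).1 := by
  have hs : ∀ k, P.IsCandidateState (decode child m (initSegs α k)) :=
    fun k => isCandidateState_foldl hchild (hchild m) _
  refine isPoint_of_stutter (fun k => ?_) (fun k => ?_) hP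
  · rw [decode_initSegs_succ]
    exact step_eq_or_isSucc (hs k) _
  · refine ⟨k + (decode child m (initSegs α k)).2.length, ?_, ?_⟩
    · have := List.length_pos_iff.2 (hs k).1
      omega
    · rw [decode_initSegs_add]
      exact (strict_foldl hchild (hs k) (by rw [initSegs_length])).2

noncomputable def decodeMorphism (hP : P.SuccTrailsArePoints) (m : V) :
    RefMorphism CantorPre P where
  toFun s := (decode child m s.1).1
  maps_points p hp := by
    obtain ⟨α, hα⟩ := exists_eq_initSegs (l := fun n => (p n).1) (fun h => hp.refines h)
      fun k => cantor_length_unbounded hp (k + 1)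
    have hcomp := (isPoint_decode hchild hP m α).comp
      (φ := fun n => (p n).1.length) (fun _ _ h => (hp.refines h).length_le)
      (cantor_length_unbounded hp)
    exact (funext fun n => congrArg (fun w => (decode child m w).1) (hα n).symm) ▸ hcomp
  reflects_apart p q _ _ := by
    rintro ⟨n, hn⟩
    refine ⟨n, fun h => ?_, fun h => ?_⟩
    · exact P.not_apart_of_refines (refines_decode_of_prefix hchild m h) (P.apart_symm _ _ hn)
    · exact P.not_apart_of_refines (refines_decode_of_prefix hchild m h) hn

end Decoding

lemma exists_digits_decode_refines (hfin : ∀ a, { b | P.refines a b }.Finite)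
    (hsucc : ∀ a, ∃ b, P.IsSucc b a) {child : V → List V}
    (hchild : ∀ a b, P.IsSucc b a → b ∈ child a) {m : V} (hm : ∀ a, P.refines a m)
    (x : P.Pt) :
    ∃ α : ℕ → ℕ, (∀ k, α k ≤ 1) ∧
      ∀ k, ∃ n, P.refines (x.1 n) (decode child m (initSegs α k)).1 := by
  let Above : V → Prop := fun a => ∃ n, P.refines (x.1 n) a
  have hsel : ∀ a, ∃ c, P.IsSucc c a ∧ (Above a → Above c) := by
    intro a
    by_cases ha : Above a
    · obtain ⟨n, hn⟩ := ha
      obtain ⟨k, hk⟩ := x.2.shrink n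
      obtain ⟨c, hc, hkc⟩ := P.exists_isSucc_between hfin (P.strict_of_strict_of_refines hk hn)
      exact ⟨c, hc, fun _ => ⟨k, hkc⟩⟩
    · obtain ⟨c, hc⟩ := hsucc a
      exact ⟨c, hc, fun h => absurd h ha⟩
  choose g hg using hsel
  let T : ℕ → V × List V := fun k =>
    Nat.rec (m, child m) (fun _ s => step child s (steerDigit g s)) k
  have hT : ∀ k, Above (T k).1 ∧ g (T k).1 ∈ (T k).2 := by
    intro k
    induction k with
    | zero => exact ⟨⟨0, hm _⟩, hchild _ _ (hg m).1⟩
    | succ k ih =>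
      have hstep : T (k + 1) = step child (T k) (steerDigit g (T k)) := rfl
      rcases step_steerDigit child g ih.2 with h | ⟨h1, h2⟩
      · rw [hstep, h]
        exact ⟨(hg _).2 ih.1, hchild _ _ (hg _).1⟩
      · rw [hstep, h1]
        exact ⟨ih.1, h2⟩
  let α : ℕ → ℕ := fun k => steerDigit g (T k)
  have hdecode : ∀ k, decode child m (initSegs α k) = T k := by
    intro k
    induction k with
    | zero => rfl
    | succ k ih => rw [decode_initSegs_succ, ih]
  refine ⟨α, fun k => ?_, fun k => hdecode k ▸ (hT k).1⟩
  simp only [α, steerDigit]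
  split <;> omega

end PreNaturalSpace

/-- classical: for every fann `𝒱` there is a natural morphism from
natural Cantor space to `𝒱`, surjective up to equivalence. -/
theorem stmt13 {V : Type} (P : PreNaturalSpace V) (hP : P.IsNaturalSpace)
    (hfann : P.IsFann) :
    ∃ f : CantorPre.Pt → P.Pt, CantorPre.IsNaturalMorphismMap P f ∧
      ∀ x : P.Pt, ∃ p : CantorPre.Pt, P.pEquiv (f p) x := by
  obtain ⟨⟨⟨m, hm, hfin, -⟩, hstp⟩, hfb⟩ := hfann
  have hsucc := P.exists_isSucc hfin hP.2
  let child : V → List V := fun a => (hfb a).toFinset.toList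
  have hmem : ∀ a b, b ∈ child a ↔ P.IsSucc b a := fun a b => by simp [child]
  have hchild : ∀ a, P.IsCandidateState (a, child a) := fun a =>
    ⟨List.ne_nil_of_mem ((hmem a _).2 (hsucc a).choose_spec), fun b => (hmem a b).1⟩
  let f := PreNaturalSpace.decodeMorphism hchild hstp m
  refine ⟨f.pointMap, Or.inl ⟨f, fun _ => rfl⟩, fun x => ?_⟩
  obtain ⟨α, hα, hx⟩ :=
    PreNaturalSpace.exists_digits_decode_refines hfin hsucc (fun a b => (hmem a b).2) hm x
  exact ⟨cantorPoint α hα, PreNaturalSpace.pEquiv_of_forall_exists_refines _ x hx⟩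
end

section
/- (In classical logic.) Let f : ℝ → ℝ be a function that is uniformly continuous on every closed bounded interval. Then there is a refinement morphism g from σ_ℝ to σ_ℝ such that ρ(g(x)) = f(ρ(x)) for every point x of σ_ℝ. -/
/-! ## The natural real numbers and the lean dyadic spraid σ_ℝ -/

/-- Basic dots for the natural reals: `none` is the maximal dot `(-∞,∞)`,
`some ⟨(p,q), _⟩` is the closed rational interval `[p,q]` with `p < q`. -/
def RDot : Type := Option { pq : ℚ × ℚ // pq.1 < pq.2 }

/-- Apartness of rational intervals: a positive gap. -/
def rApart : RDot → RDot → Prop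
  | some a, some b => b.1.2 < a.1.1 ∨ a.1.2 < b.1.1
  | _, _ => False

/-- Refinement of rational intervals: containment of closed intervals. -/
def rRefines : RDot → RDot → Prop
  | _, none => True
  | none, some _ => False
  | some a, some b => b.1.1 ≤ a.1.1 ∧ a.1.2 ≤ b.1.2

/-- The pre-natural space of the natural real numbers. -/
noncomputable def RPre : PreNaturalSpace RDot where
  countable' := by unfold RDot; infer_instance
  apart := rApart
  refines := rRefines
  apart_dec := Classical.decRel _
  refines_dec := Classical.decRel _
  apart_symm := by
    rintro (_ | a) (_ | b) h <;> simp [rApart] at h ⊢ <;> tauto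
  apart_irrefl := by
    rintro (_ | a) h
    · exact h
    · simp only [rApart] at h
      rcases h with h | h <;> exact absurd a.2 (not_lt.mpr h.le)
  apart_mono := by
    rintro (_ | a) (_ | b) (_ | c) hab hcb <;>
      simp [rApart, rRefines] at hab hcb ⊢
    rcases hcb with h | h
    · exact Or.inl (lt_of_le_of_lt hab.2 h)
    · exact Or.inr (lt_of_lt_of_le h hab.1)
  refines_refl := by rintro (_ | a) <;> simp [rRefines]
  refines_trans := by
    rintro (_ | a) (_ | b) (_ | c) h1 h2 <;> simp [rRefines] at h1 h2 ⊢
    exact ⟨le_trans h2.1 h1.1, le_trans h1.2 h2.2⟩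
  refines_antisymm := by
    rintro (_ | a) (_ | b) h1 h2 <;> simp [rRefines] at h1 h2 ⊢
    · rfl
    have : a.1 = b.1 := Prod.ext (le_antisymm h2.1 h1.1) (le_antisymm h1.2 h2.2)
    exact congrArg some (Subtype.ext this)

lemma dyadic_lt (n : ℤ) (m : ℕ) : (n : ℚ) / 2 ^ m < ((n : ℚ) + 2) / 2 ^ m := by
  have h2 : (0 : ℚ) < 2 ^ m := by positivity
  rw [div_lt_div_iff_of_pos_right h2]
  linarith

/-- The lean dyadic interval `[n/2^m, (n+2)/2^m]` as a dot of the natural reals. -/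
def leanIv (n : ℤ) (m : ℕ) : RDot :=
  some ⟨((n : ℚ) / 2 ^ m, ((n : ℚ) + 2) / 2 ^ m), dyadic_lt n m⟩

/-- The basic dots of `σ_ℝ` : the maximal dot together with the lean dyadic intervals. -/
def IsLeanDyadic : Set RDot := { d | d = none ∨ ∃ (n : ℤ) (m : ℕ), d = leanIv n m }

/-- The spraid `σ_ℝ` of lean dyadic intervals, with the apartness and refinement
of the natural reals. -/
noncomputable def SigPre : PreNaturalSpace IsLeanDyadic := RPre.restrict IsLeanDyadic

/-- The unique real number represented by a natural real: the supremum of the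
left endpoints of its intervals. -/
noncomputable def rhoR (x : RPre.Pt) : ℝ :=
  sSup { r : ℝ | ∃ (n : ℕ) (pq : { pq : ℚ × ℚ // pq.1 < pq.2 }),
    x.1 n = some pq ∧ r = (pq.1.1 : ℝ) }

/-- The unique real number represented by a point of `σ_ℝ`. -/
noncomputable def rhoSig (x : SigPre.Pt) : ℝ :=
  sSup { r : ℝ | ∃ (n : ℕ) (pq : { pq : ℚ × ℚ // pq.1 < pq.2 }),
    (x.1 n).1 = some pq ∧ r = (pq.1.1 : ℝ) }

/-!
A continuous `f` is represented by a monotone map on lean dyadic dots. A dot on which `f`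
oscillates by at most `2^-(s+1)` has a rough image: a lean interval of scale `s` containing the
values of `f` on the dot in its interior. The image of a dot is the intersection of the rough
images of its finitely many qualifying ancestors. It is again a lean interval, refining a dot
only adds ancestors, so the map is monotone, and the image contains every value of `f` on the
dot, so apartness of images is reflected. Along a point the oscillation tends to `0` by
continuity at the real it represents, so the scales of the images are unbounded: the images
form a point, and it represents the value of `f` at that real.
-/

namespace LeanDyadic

open Set

lemma exists_two_div_two_pow_lt {ε : ℝ} (hε : 0 < ε) : ∃ t : ℕ, 2 / 2 ^ t < ε := by
  obtain ⟨t, ht⟩ := exists_pow_lt_of_lt_one (half_pos hε) one_half_lt_one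
  exact ⟨t, by rw [one_div, inv_pow] at ht; rw [div_eq_mul_inv]; linarith⟩

lemma two_div_two_pow_le {s t : ℕ} (h : t ≤ s) : (2 : ℝ) / 2 ^ s ≤ 2 / 2 ^ t := by
  gcongr; norm_num

def leanLeft (k : ℤ) (t : ℕ) : ℚ := k / 2 ^ t

def leanRight (k : ℤ) (t : ℕ) : ℚ := (k + 2) / 2 ^ t

lemma leanRight_eq (k : ℤ) (t : ℕ) : leanRight k t = leanLeft (k + 2) t := by
  simp [leanLeft, leanRight]

lemma leanRight_sub_leanLeft (k : ℤ) (t : ℕ) : leanRight k t - leanLeft k t = 2 / 2 ^ t := by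
  rw [leanRight, leanLeft]; ring

lemma leanLeft_strictMono (t : ℕ) : StrictMono fun k => leanLeft k t := fun a b h => by
  unfold leanLeft
  exact div_lt_div_of_pos_right (by exact_mod_cast h) (by positivity)

lemma leanLeft_mul_two_pow (k : ℤ) (t : ℕ) : leanLeft k t * 2 ^ t = k := by
  simp [leanLeft]

lemma leanLeft_eq_of_le {s S : ℕ} (h : s ≤ S) (k : ℤ) :
    leanLeft k s = leanLeft (k * 2 ^ (S - s)) S := by
  rw [leanLeft, leanLeft, ← Nat.add_sub_cancel' h, pow_add, Nat.add_sub_cancel_left]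
  push_cast
  field_simp

lemma rRefines_leanIv_iff {n κ : ℤ} {m τ : ℕ} :
    rRefines (leanIv n m) (leanIv κ τ) ↔
      leanLeft κ τ ≤ leanLeft n m ∧ leanRight n m ≤ leanRight κ τ :=
  Iff.rfl

lemma scale_le_of_rRefines {n κ : ℤ} {m τ : ℕ} (h : rRefines (leanIv n m) (leanIv κ τ)) :
    τ ≤ m := by
  rw [rRefines_leanIv_iff] at h
  have hw : (2 : ℚ) / 2 ^ m ≤ 2 / 2 ^ τ := by
    rw [← leanRight_sub_leanLeft, ← leanRight_sub_leanLeft]; linarith [h.1, h.2]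
  rw [div_le_div_iff_of_pos_left two_pos (by positivity) (by positivity)] at hw
  exact (pow_le_pow_iff_right₀ one_lt_two).1 hw

lemma scale_lt_of_rRefines {n κ : ℤ} {m τ : ℕ} (h : rRefines (leanIv n m) (leanIv κ τ))
    (hne : leanIv n m ≠ leanIv κ τ) : τ < m := by
  refine (scale_le_of_rRefines h).lt_of_ne fun hτ => hne ?_
  subst hτ
  rw [rRefines_leanIv_iff, leanRight_eq, leanRight_eq, (leanLeft_strictMono τ).le_iff_le,
    (leanLeft_strictMono τ).le_iff_le] at h
  rw [le_antisymm h.1 (by linarith [h.2])]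

lemma leanIv_injective {a c : ℤ} {b d : ℕ} (h : leanIv a b = leanIv c d) : a = c ∧ b = d := by
  have hab : rRefines (leanIv a b) (leanIv c d) := h ▸ RPre.refines_refl (leanIv a b)
  have hcd : rRefines (leanIv c d) (leanIv a b) := h ▸ RPre.refines_refl (leanIv a b)
  have hbd : b = d := le_antisymm (scale_le_of_rRefines hcd) (scale_le_of_rRefines hab)
  subst hbd
  have := congrArg (fun x : RDot => x.map (·.1.1)) h
  exact ⟨(leanLeft_strictMono b).injective (Option.some_injective _ this), rfl⟩

def dotSet : RDot → Set ℝ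
  | none => univ
  | some pq => Icc (pq.1.1 : ℝ) pq.1.2

lemma dotSet_leanIv (k : ℤ) (t : ℕ) :
    dotSet (leanIv k t) = Icc (leanLeft k t : ℝ) (leanRight k t) := rfl

lemma dotSet_subset_of_rRefines {a b : RDot} (h : rRefines a b) : dotSet a ⊆ dotSet b := by
  rcases a with _ | a <;> rcases b with _ | b
  · exact subset_rfl
  · exact h.elim
  · exact subset_univ _
  · exact Icc_subset_Icc (by exact_mod_cast h.1) (by exact_mod_cast h.2)

lemma dotSet_nonempty : ∀ a : RDot, (dotSet a).Nonempty
  | none => univ_nonempty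
  | some pq => nonempty_Icc.2 (by exact_mod_cast pq.2.le)

lemma abs_sub_le_of_mem_dotSet {k : ℤ} {t : ℕ} {x y : ℝ} (hx : x ∈ dotSet (leanIv k t))
    (hy : y ∈ dotSet (leanIv k t)) : |x - y| ≤ 2 / 2 ^ t := by
  have hw : (leanRight k t : ℝ) - leanLeft k t = 2 / 2 ^ t := by
    rw [← Rat.cast_sub, leanRight_sub_leanLeft]; push_cast; rfl
  rw [dotSet_leanIv] at hx hy
  rw [abs_sub_le_iff]
  constructor <;> linarith [hx.1, hx.2, hy.1, hy.2]

lemma rApart_iff_disjoint {a b : RDot} : rApart a b ↔ Disjoint (dotSet a) (dotSet b) := by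
  rcases a with _ | ⟨⟨a₁, a₂⟩, ha : a₁ < a₂⟩ <;>
    rcases b with _ | ⟨⟨b₁, b₂⟩, hb : b₁ < b₂⟩
  · simp [rApart, dotSet]
  · simpa [rApart, dotSet] using (dotSet_nonempty (some ⟨(b₁, b₂), hb⟩)).ne_empty
  · simpa [rApart, dotSet] using (dotSet_nonempty (some ⟨(a₁, a₂), ha⟩)).ne_empty
  · simp only [rApart, dotSet]
    rw [disjoint_iff_inter_eq_empty, Icc_inter_Icc, Icc_eq_empty_iff, sup_le_iff, le_inf_iff,
      le_inf_iff]
    norm_cast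
    grind

def ScalesUnbounded (q : ℕ → IsLeanDyadic) : Prop :=
  ∀ t, ∃ n k s, (q n).1 = leanIv k s ∧ t ≤ s

lemma eq_leanIv_of_rRefines {d : IsLeanDyadic} {k : ℤ} {s : ℕ} (h : rRefines d.1 (leanIv k s)) :
    ∃ k' s', d.1 = leanIv k' s' ∧ s ≤ s' := by
  rcases d.2 with hd | ⟨k', s', hd⟩
  · rw [hd] at h; exact h.elim
  · rw [hd] at h ⊢; exact ⟨k', s', rfl, scale_le_of_rRefines h⟩

lemma ScalesUnbounded.eventually {q : ℕ → IsLeanDyadic} (hq : ScalesUnbounded q)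
    (hmono : ∀ n, SigPre.refines (q (n + 1)) (q n)) (t : ℕ) :
    ∃ N, ∀ n, N ≤ n → ∃ k s, (q n).1 = leanIv k s ∧ t ≤ s := by
  obtain ⟨N, k, s, hN, hts⟩ := hq t
  refine ⟨N, fun n hn => ?_⟩
  have h : rRefines (q n).1 (leanIv k s) := hN ▸ SigPre.refines_of_le hmono hn
  obtain ⟨k', s', h', hs⟩ := eq_leanIv_of_rRefines h
  exact ⟨k', s', h', hts.trans hs⟩

lemma scalesUnbounded_of_isPoint {q : ℕ → IsLeanDyadic} (hq : SigPre.IsPoint q) :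
    ScalesUnbounded q := by
  intro t
  induction t with
  | zero =>
    obtain ⟨m, hm, hne⟩ := hq.shrink 0
    rcases (q m).2 with h | ⟨k, s, h⟩
    · have hm : rRefines none (q 0).1 := h ▸ hm
      refine absurd (Subtype.ext (h.trans ?_)) hne
      rcases h0 : (q 0).1 with _ | _
      · rfl
      · rw [h0] at hm; exact hm.elim
    · exact ⟨m, k, s, h, s.zero_le⟩
  | succ t ih =>
    obtain ⟨n, k, s, hn, hts⟩ := ih
    obtain ⟨m, hm, hne⟩ := hq.shrink n
    have h : rRefines (q m).1 (leanIv k s) := hn ▸ hm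
    obtain ⟨k', s', h', -⟩ := eq_leanIv_of_rRefines h
    rw [h'] at h
    refine ⟨m, k', s', h', hts.trans_lt (scale_lt_of_rRefines h fun he => hne ?_)⟩
    exact Subtype.ext (h'.trans (he.trans hn.symm))

lemma exists_dotSet_subset_Icc {q : ℕ → IsLeanDyadic} (hq : ScalesUnbounded q) {y : ℝ}
    (hy : ∀ n, y ∈ dotSet (q n).1) {ε : ℝ} (hε : 0 < ε) :
    ∃ n, dotSet (q n).1 ⊆ Icc (y - ε) (y + ε) := by
  obtain ⟨t, ht⟩ := exists_two_div_two_pow_lt hε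
  obtain ⟨n, k, s, hn, hts⟩ := hq t
  refine ⟨n, fun z hz => ?_⟩
  have hyn := hy n
  rw [hn] at hz hyn
  have hzy := abs_sub_le_of_mem_dotSet hz hyn
  have := two_div_two_pow_le hts
  rw [abs_sub_le_iff] at hzy
  constructor <;> linarith [hzy.1, hzy.2]

lemma exists_rApart_of_not_mem {q : ℕ → IsLeanDyadic} (hq : ScalesUnbounded q) {y : ℝ}
    (hy : ∀ n, y ∈ dotSet (q n).1) {c : RDot} (hc : y ∉ dotSet c) :
    ∃ n, rApart (q n).1 c := by
  rcases c with _ | ⟨⟨c₁, c₂⟩, _⟩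
  · exact absurd trivial hc
  simp only [dotSet, mem_Icc, not_and_or, not_le] at hc
  obtain ⟨ε, hε, hdisj⟩ :
      ∃ ε > 0, Disjoint (Icc (y - ε) (y + ε)) (Icc (c₁ : ℝ) c₂) := by
    rcases hc with hc | hc
    · exact ⟨(c₁ - y) / 2, by linarith, disjoint_left.2 fun z hz hz' => by
        linarith [hz.2, hz'.1]⟩
    · exact ⟨(y - c₂) / 2, by linarith, disjoint_left.2 fun z hz hz' => by
        linarith [hz.1, hz'.2]⟩
  obtain ⟨n, hn⟩ := exists_dotSet_subset_Icc hq hy hε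
  exact ⟨n, rApart_iff_disjoint.2 (hdisj.mono_left hn)⟩

lemma isPoint_of_scalesUnbounded {q : ℕ → IsLeanDyadic}
    (hmono : ∀ n, SigPre.refines (q (n + 1)) (q n)) (hq : ScalesUnbounded q) {y : ℝ}
    (hy : ∀ n, y ∈ dotSet (q n).1) : SigPre.IsPoint q where
  mono := hmono
  shrink n := by
    obtain ⟨t, ht⟩ : ∃ t, ∀ k s, (q n).1 = leanIv k s → s < t := by
      rcases (q n).2 with h | ⟨k, s, h⟩
      · exact ⟨0, fun k s h' => absurd (h.symm.trans h') (Option.some_ne_none _).symm⟩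
      · exact ⟨s + 1, fun _ _ h' => (leanIv_injective (h'.symm.trans h)).2 ▸ s.lt_succ_self⟩
    obtain ⟨N, hN⟩ := hq.eventually hmono t
    obtain ⟨k, s, hks, hts⟩ := hN (max n N) (le_max_right n N)
    refine ⟨max n N, SigPre.refines_of_le hmono (le_max_left n N), fun he => ?_⟩
    exact (ht k s (he ▸ hks)).not_ge hts
  decides a b hab := by
    have hy' : y ∉ dotSet a.1 ∨ y ∉ dotSet b.1 := by
      by_contra! h
      exact (rApart_iff_disjoint.1 hab).ne_of_mem h.1 h.2 rfl
    rcases hy' with h | h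
    · obtain ⟨n, hn⟩ := exists_rApart_of_not_mem hq hy h
      exact ⟨n, Or.inl hn⟩
    · obtain ⟨n, hn⟩ := exists_rApart_of_not_mem hq hy h
      exact ⟨n, Or.inr hn⟩

lemma left_le_right_of_isPoint (x : SigPre.Pt) {n n' : ℕ} {a b : {pq : ℚ × ℚ // pq.1 < pq.2}}
    (ha : (x.1 n).1 = some a) (hb : (x.1 n').1 = some b) : b.1.1 ≤ a.1.2 := by
  rcases le_total n n' with h | h
  · have hr : rRefines (some b) (some a) := ha ▸ hb ▸ SigPre.refines_of_le x.2.mono h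
    exact b.2.le.trans hr.2
  · have hr : rRefines (some a) (some b) := ha ▸ hb ▸ SigPre.refines_of_le x.2.mono h
    exact hr.1.trans a.2.le

lemma rhoSig_mem (x : SigPre.Pt) (n : ℕ) : rhoSig x ∈ dotSet (x.1 n).1 := by
  rcases ha : (x.1 n).1 with _ | a
  · trivial
  have hub : ∀ r ∈ {r : ℝ | ∃ (n : ℕ) (pq : {pq : ℚ × ℚ // pq.1 < pq.2}),
      (x.1 n).1 = some pq ∧ r = (pq.1.1 : ℝ)}, r ≤ a.1.2 := by
    rintro r ⟨n', b, hb, rfl⟩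
    exact_mod_cast left_le_right_of_isPoint x ha hb
  exact ⟨le_csSup ⟨_, hub⟩ ⟨n, a, ha, rfl⟩, csSup_le ⟨_, n, a, ha, rfl⟩ hub⟩

lemma rhoSig_eq_of_forall_mem (x : SigPre.Pt) {y : ℝ} (hy : ∀ n, y ∈ dotSet (x.1 n).1) :
    rhoSig x = y := by
  refine eq_of_forall_dist_le fun ε hε => ?_
  obtain ⟨n, hn⟩ := exists_dotSet_subset_Icc (scalesUnbounded_of_isPoint x.2) hy hε
  rw [Real.dist_eq, abs_sub_le_iff]
  have := hn (rhoSig_mem x n)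
  constructor <;> linarith [this.1, this.2]

theorem exists_refMorphism_of_mapsTo (f : ℝ → ℝ) (g : IsLeanDyadic → IsLeanDyadic)
    (hmono : ∀ a b, SigPre.refines a b → SigPre.refines (g a) (g b))
    (hmaps : ∀ a, MapsTo f (dotSet a.1) (dotSet (g a).1))
    (hfine : ∀ x : SigPre.Pt, ScalesUnbounded fun n => g (x.1 n)) :
    ∃ G : RefMorphism SigPre SigPre, ∀ x, rhoSig (G.pointMap x) = f (rhoSig x) :=
  ⟨{ toFun := g
     maps_points := fun p hp => isPoint_of_scalesUnbounded (fun n => hmono _ _ (hp.mono n))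
       (hfine ⟨p, hp⟩) fun n => hmaps _ (rhoSig_mem ⟨p, hp⟩ n)
     reflects_apart := fun _ _ _ _ ⟨n, hn⟩ => ⟨n, rApart_iff_disjoint.2
       (((rApart_iff_disjoint.1 hn).preimage f).mono (hmaps _).subset_preimage
         (hmaps _).subset_preimage)⟩ },
   fun x => rhoSig_eq_of_forall_mem _ fun n => hmaps _ (rhoSig_mem x n)⟩

lemma leanLeft_floor_lt_and_lt_leanRight {L U : ℝ} {s : ℕ} (h : U - L ≤ 1 / 2 ^ (s + 1)) :
    (leanLeft ⌊L * 2 ^ s - 1 / 4⌋ s : ℝ) < L ∧ U < leanRight ⌊L * 2 ^ s - 1 / 4⌋ s := by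
  have h₁ := Int.floor_le (L * 2 ^ s - 1 / 4)
  have h₂ := Int.lt_floor_add_one (L * 2 ^ s - 1 / 4)
  have hs : (0 : ℝ) < 2 ^ s := by positivity
  have hU : U * 2 ^ s ≤ L * 2 ^ s + 1 / 2 := by
    have : (U - L) * 2 ^ s ≤ 1 / 2 := by
      calc (U - L) * 2 ^ s ≤ 1 / 2 ^ (s + 1) * 2 ^ s := by gcongr
      _ = 1 / 2 := by rw [pow_succ]; field_simp
    linarith
  simp only [leanLeft, leanRight]
  push_cast
  rw [div_lt_iff₀ hs, lt_div_iff₀ hs]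
  constructor <;> linarith

/-- The lean interval `[A/2^S, B/2^S]` when `A < B ≤ A + 2`: of scale `S` if `B = A + 2`,
of scale `S + 1` if `B = A + 1`. -/
def leanOfEndpoints (A B : ℤ) (S : ℕ) : ℤ × ℕ :=
  if B = A + 2 then (A, S) else (2 * A, S + 1)

lemma leanOfEndpoints_spec {A B : ℤ} (S : ℕ) (hAB : A < B) (hBA : B ≤ A + 2) :
    leanLeft (leanOfEndpoints A B S).1 (leanOfEndpoints A B S).2 = leanLeft A S ∧
    leanRight (leanOfEndpoints A B S).1 (leanOfEndpoints A B S).2 = leanLeft B S ∧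
    S ≤ (leanOfEndpoints A B S).2 := by
  unfold leanOfEndpoints
  split_ifs with h
  · exact ⟨rfl, by rw [leanRight_eq, h], le_rfl⟩
  · have hB : B = A + 1 := by omega
    refine ⟨?_, ?_, S.le_succ⟩
    · rw [leanLeft_eq_of_le (S.le_add_right 1) A, Nat.add_sub_cancel_left, pow_one, mul_comm]
    · rw [leanRight_eq, hB, leanLeft_eq_of_le (S.le_add_right 1) (A + 1),
        Nat.add_sub_cancel_left]
      ring_nf

noncomputable section Construction

variable (f : ℝ → ℝ)

def lowerOn (k : ℤ) (t : ℕ) : ℝ := sInf (f '' dotSet (leanIv k t))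

def upperOn (k : ℤ) (t : ℕ) : ℝ := sSup (f '' dotSet (leanIv k t))

def Qualifies (k : ℤ) (t : ℕ) : Prop := upperOn f k t - lowerOn f k t ≤ 1 / 2

/-- The rough image of a qualifying dot `leanIv k t` is a lean interval of this scale, anchored
a quarter unit below `lowerOn f k t`. -/
def roughScale (k : ℤ) (t : ℕ) : ℕ :=
  Nat.findGreatest (fun s => upperOn f k t - lowerOn f k t ≤ 1 / 2 ^ (s + 1)) t

def roughIndex (k : ℤ) (t : ℕ) : ℤ :=
  ⌊lowerOn f k t * 2 ^ roughScale f k t - 1 / 4⌋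

def roughLeft (k : ℤ) (t : ℕ) : ℚ := leanLeft (roughIndex f k t) (roughScale f k t)

def roughRight (k : ℤ) (t : ℕ) : ℚ := leanRight (roughIndex f k t) (roughScale f k t)

variable {f}

lemma lowerOn_le (hc : Continuous f) {k : ℤ} {t : ℕ} {x : ℝ}
    (hx : x ∈ dotSet (leanIv k t)) :
    lowerOn f k t ≤ f x :=
  csInf_le (isCompact_Icc.image hc).bddBelow (mem_image_of_mem f hx)

lemma le_upperOn (hc : Continuous f) {k : ℤ} {t : ℕ} {x : ℝ}
    (hx : x ∈ dotSet (leanIv k t)) :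
    f x ≤ upperOn f k t :=
  le_csSup (isCompact_Icc.image hc).bddAbove (mem_image_of_mem f hx)

lemma lowerOn_le_upperOn (hc : Continuous f) (k : ℤ) (t : ℕ) :
    lowerOn f k t ≤ upperOn f k t :=
  have ⟨_, hx⟩ := dotSet_nonempty (leanIv k t)
  (lowerOn_le hc hx).trans (le_upperOn hc hx)

lemma lowerOn_mono (hc : Continuous f) {n κ : ℤ} {m τ : ℕ}
    (h : rRefines (leanIv n m) (leanIv κ τ)) : lowerOn f κ τ ≤ lowerOn f n m :=
  csInf_le_csInf (isCompact_Icc.image hc).bddBelow ((dotSet_nonempty (leanIv n m)).image f)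
    (image_mono (dotSet_subset_of_rRefines h))

lemma upperOn_mono (hc : Continuous f) {n κ : ℤ} {m τ : ℕ}
    (h : rRefines (leanIv n m) (leanIv κ τ)) : upperOn f n m ≤ upperOn f κ τ :=
  csSup_le_csSup (isCompact_Icc.image hc).bddAbove ((dotSet_nonempty (leanIv n m)).image f)
    (image_mono (dotSet_subset_of_rRefines h))

lemma upperOn_sub_lowerOn_le {k : ℤ} {t : ℕ} {c r : ℝ}
    (hr : ∀ z ∈ dotSet (leanIv k t), |f z - c| ≤ r) :
    upperOn f k t - lowerOn f k t ≤ 2 * r := by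
  have hne := (dotSet_nonempty (leanIv k t)).image f
  have hup : upperOn f k t ≤ c + r :=
    csSup_le hne (forall_mem_image.2 fun z hz => by linarith [(abs_le.1 (hr z hz)).2])
  have hlo : c - r ≤ lowerOn f k t :=
    le_csInf hne (forall_mem_image.2 fun z hz => by linarith [(abs_le.1 (hr z hz)).1])
  linarith

lemma roughLeft_lt_and_lt_roughRight {k : ℤ} {t : ℕ} (hq : Qualifies f k t) :
    (roughLeft f k t : ℝ) < lowerOn f k t ∧ upperOn f k t < roughRight f k t :=
  leanLeft_floor_lt_and_lt_leanRight
    (Nat.findGreatest_spec (P := fun s => upperOn f k t - lowerOn f k t ≤ 1 / 2 ^ (s + 1))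
      t.zero_le (by simpa [Qualifies] using hq))

variable (f) in
lemma finite_setOf_rRefines_leanIv (n : ℤ) (m : ℕ) :
    {kt : ℤ × ℕ | rRefines (leanIv n m) (leanIv kt.1 kt.2)}.Finite := by
  refine ((finite_Icc (-|n| - 2) |n|).prod (finite_Iic m)).subset ?_
  rintro ⟨κ, τ⟩ h
  have hτ : τ ≤ m := scale_le_of_rRefines h
  have h := rRefines_leanIv_iff.1 h
  rw [leanLeft, leanLeft, leanRight, leanRight, div_le_div_iff₀ (by positivity) (by positivity),
    div_le_div_iff₀ (by positivity) (by positivity)] at h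
  have hP : (0 : ℚ) < 2 ^ τ := by positivity
  have hPQ : (2 : ℚ) ^ τ ≤ 2 ^ m := pow_le_pow_right₀ one_le_two hτ
  have habs : (n : ℚ) ≤ |(n : ℚ)| := le_abs_self _
  have habs' : -|(n : ℚ)| ≤ n := neg_abs_le _
  have h₁ : (κ : ℚ) ≤ |(n : ℚ)| := by nlinarith
  have h₂ : -|(n : ℚ)| - 2 ≤ (κ : ℚ) := by nlinarith
  refine ⟨⟨?_, ?_⟩, hτ⟩ <;> [exact_mod_cast h₂; exact_mod_cast h₁]

variable (f) in
open scoped Classical in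
def qualAncestors (n : ℤ) (m : ℕ) : Finset (ℤ × ℕ) :=
  (finite_setOf_rRefines_leanIv n m).toFinset.filter fun kt => Qualifies f kt.1 kt.2

lemma mem_qualAncestors {n : ℤ} {m : ℕ} {kt : ℤ × ℕ} :
    kt ∈ qualAncestors f n m ↔
      rRefines (leanIv n m) (leanIv kt.1 kt.2) ∧ Qualifies f kt.1 kt.2 := by
  simp [qualAncestors]

lemma qualAncestors_mono {n κ : ℤ} {m τ : ℕ} (h : rRefines (leanIv n m) (leanIv κ τ)) :
    qualAncestors f κ τ ⊆ qualAncestors f n m := fun kt hkt =>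
  have ⟨href, hq⟩ := mem_qualAncestors.1 hkt
  mem_qualAncestors.2
    ⟨RPre.refines_trans (leanIv n m) (leanIv κ τ) (leanIv kt.1 kt.2) h href, hq⟩

variable (f)

/-- The image of `leanIv n m` is the intersection of the rough images of its qualifying
ancestors; taking all ancestors is what makes the dot map monotone. -/
def imageLeft (n : ℤ) (m : ℕ) : ℚ :=
  if h : (qualAncestors f n m).Nonempty then (qualAncestors f n m).sup' h fun kt =>
    roughLeft f kt.1 kt.2 else 0

def imageRight (n : ℤ) (m : ℕ) : ℚ :=
  if h : (qualAncestors f n m).Nonempty then (qualAncestors f n m).inf' h fun kt =>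
    roughRight f kt.1 kt.2 else 0

def imageScale (n : ℤ) (m : ℕ) : ℕ :=
  if h : (qualAncestors f n m).Nonempty then (qualAncestors f n m).sup' h fun kt =>
    roughScale f kt.1 kt.2 else 0

/-- The endpoints of the intersection are multiples of `2^-S`, `S = imageScale f n m`, and it
lies in a rough image of scale `S`, so it is a lean interval of scale `S` or `S + 1`. -/
def imagePair (n : ℤ) (m : ℕ) : ℤ × ℕ :=
  leanOfEndpoints ⌊imageLeft f n m * 2 ^ imageScale f n m⌋
    ⌊imageRight f n m * 2 ^ imageScale f n m⌋ (imageScale f n m)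

variable {f}

lemma imageLeft_lt_lowerOn (hc : Continuous f) {n : ℤ} {m : ℕ}
    (hne : (qualAncestors f n m).Nonempty) : (imageLeft f n m : ℝ) < lowerOn f n m := by
  obtain ⟨kt, hkt, he⟩ := Finset.exists_mem_eq_sup' hne fun kt => roughLeft f kt.1 kt.2
  obtain ⟨href, hq⟩ := mem_qualAncestors.1 hkt
  rw [imageLeft, dif_pos hne, he]
  exact (roughLeft_lt_and_lt_roughRight hq).1.trans_le (lowerOn_mono hc href)

lemma upperOn_lt_imageRight (hc : Continuous f) {n : ℤ} {m : ℕ}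
    (hne : (qualAncestors f n m).Nonempty) : upperOn f n m < imageRight f n m := by
  obtain ⟨kt, hkt, he⟩ := Finset.exists_mem_eq_inf' hne fun kt => roughRight f kt.1 kt.2
  obtain ⟨href, hq⟩ := mem_qualAncestors.1 hkt
  rw [imageRight, dif_pos hne, he]
  exact (upperOn_mono hc href).trans_lt (roughLeft_lt_and_lt_roughRight hq).2

lemma imageLeft_lt_imageRight (hc : Continuous f) {n : ℤ} {m : ℕ}
    (hne : (qualAncestors f n m).Nonempty) : imageLeft f n m < imageRight f n m := by
  have := (imageLeft_lt_lowerOn hc hne).trans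
    ((lowerOn_le_upperOn hc n m).trans_lt (upperOn_lt_imageRight hc hne))
  exact_mod_cast this

lemma imageLeft_mono {n κ : ℤ} {m τ : ℕ}
    (hsub : qualAncestors f κ τ ⊆ qualAncestors f n m)
    (hne : (qualAncestors f κ τ).Nonempty) : imageLeft f κ τ ≤ imageLeft f n m := by
  rw [imageLeft, imageLeft, dif_pos hne, dif_pos (hne.mono hsub)]
  exact Finset.sup'_mono _ hsub hne

lemma imageRight_mono {n κ : ℤ} {m τ : ℕ}
    (hsub : qualAncestors f κ τ ⊆ qualAncestors f n m)
    (hne : (qualAncestors f κ τ).Nonempty) : imageRight f n m ≤ imageRight f κ τ := by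
  rw [imageRight, imageRight, dif_pos hne, dif_pos (hne.mono hsub)]
  exact Finset.inf'_mono _ hsub hne

lemma roughScale_le_imageScale {n : ℤ} {m : ℕ} {kt : ℤ × ℕ}
    (hkt : kt ∈ qualAncestors f n m) :
    roughScale f kt.1 kt.2 ≤ imageScale f n m := by
  rw [imageScale, dif_pos ⟨kt, hkt⟩]
  exact Finset.le_sup' (f := fun kt : ℤ × ℕ => roughScale f kt.1 kt.2) hkt

lemma exists_imageLeft_eq {n : ℤ} {m : ℕ} (hne : (qualAncestors f n m).Nonempty) :
    ∃ A, imageLeft f n m = leanLeft A (imageScale f n m) := by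
  obtain ⟨kt, hkt, he⟩ := Finset.exists_mem_eq_sup' hne fun kt => roughLeft f kt.1 kt.2
  rw [imageLeft, dif_pos hne, he, roughLeft,
    leanLeft_eq_of_le (roughScale_le_imageScale hkt)]
  exact ⟨_, rfl⟩

lemma exists_imageRight_eq {n : ℤ} {m : ℕ} (hne : (qualAncestors f n m).Nonempty) :
    ∃ B, imageRight f n m = leanLeft B (imageScale f n m) := by
  obtain ⟨kt, hkt, he⟩ := Finset.exists_mem_eq_inf' hne fun kt => roughRight f kt.1 kt.2
  rw [imageRight, dif_pos hne, he, roughRight, leanRight_eq,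
    leanLeft_eq_of_le (roughScale_le_imageScale hkt)]
  exact ⟨_, rfl⟩

lemma exists_image_subset_leanIv {n : ℤ} {m : ℕ} (hne : (qualAncestors f n m).Nonempty) :
    ∃ K, leanLeft K (imageScale f n m) ≤ imageLeft f n m ∧
      imageRight f n m ≤ leanLeft (K + 2) (imageScale f n m) := by
  obtain ⟨kt, hkt, he⟩ := Finset.exists_mem_eq_sup' hne fun kt => roughScale f kt.1 kt.2
  refine ⟨roughIndex f kt.1 kt.2, ?_, ?_⟩
  · rw [imageScale, dif_pos hne, he, imageLeft, dif_pos hne, ← roughLeft]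
    exact Finset.le_sup' (f := fun kt : ℤ × ℕ => roughLeft f kt.1 kt.2) hkt
  · rw [imageScale, dif_pos hne, he, imageRight, dif_pos hne, ← leanRight_eq, ← roughRight]
    exact Finset.inf'_le (f := fun kt : ℤ × ℕ => roughRight f kt.1 kt.2) hkt

lemma imagePair_spec (hc : Continuous f) {n : ℤ} {m : ℕ}
    (hne : (qualAncestors f n m).Nonempty) :
    leanLeft (imagePair f n m).1 (imagePair f n m).2 = imageLeft f n m ∧
    leanRight (imagePair f n m).1 (imagePair f n m).2 = imageRight f n m ∧
    imageScale f n m ≤ (imagePair f n m).2 := by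
  obtain ⟨A, hA⟩ := exists_imageLeft_eq hne
  obtain ⟨B, hB⟩ := exists_imageRight_eq hne
  obtain ⟨K, hKA, hBK⟩ := exists_image_subset_leanIv hne
  have hmono := leanLeft_strictMono (imageScale f n m)
  have hAB : A < B := hmono.lt_iff_lt.1 (hA ▸ hB ▸ imageLeft_lt_imageRight hc hne)
  have hKA : K ≤ A := hmono.le_iff_le.1 (hA ▸ hKA)
  have hBK : B ≤ K + 2 := hmono.le_iff_le.1 (hB ▸ hBK)
  rw [imagePair, hA, hB, leanLeft_mul_two_pow, leanLeft_mul_two_pow, Int.floor_intCast,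
    Int.floor_intCast]
  exact leanOfEndpoints_spec _ hAB (by omega)

variable (f) in
open scoped Classical in
def imageDot (d : IsLeanDyadic) : IsLeanDyadic :=
  if h : ∃ kt : ℤ × ℕ, d.1 = leanIv kt.1 kt.2 ∧ (qualAncestors f kt.1 kt.2).Nonempty then
    ⟨leanIv (imagePair f h.choose.1 h.choose.2).1 (imagePair f h.choose.1 h.choose.2).2,
      Or.inr ⟨_, _, rfl⟩⟩
  else ⟨none, Or.inl rfl⟩

lemma imageDot_of_nonempty {d : IsLeanDyadic} {n : ℤ} {m : ℕ} (hd : d.1 = leanIv n m)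
    (hne : (qualAncestors f n m).Nonempty) :
    (imageDot f d).1 = leanIv (imagePair f n m).1 (imagePair f n m).2 := by
  have h : ∃ kt : ℤ × ℕ, d.1 = leanIv kt.1 kt.2 ∧ (qualAncestors f kt.1 kt.2).Nonempty :=
    ⟨(n, m), hd, hne⟩
  obtain ⟨hn, hm⟩ := leanIv_injective (h.choose_spec.1.symm.trans hd)
  rw [imageDot, dif_pos h, ← hn, ← hm]

lemma imageDot_cases (d : IsLeanDyadic) :
    (imageDot f d).1 = none ∨ ∃ n m, d.1 = leanIv n m ∧ (qualAncestors f n m).Nonempty := by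
  by_cases h : ∃ kt : ℤ × ℕ, d.1 = leanIv kt.1 kt.2 ∧ (qualAncestors f kt.1 kt.2).Nonempty
  · obtain ⟨⟨n, m⟩, hd, hne⟩ := h
    exact Or.inr ⟨n, m, hd, hne⟩
  · rw [imageDot, dif_neg h]
    exact Or.inl rfl

lemma imageDot_mono (hc : Continuous f) {a b : IsLeanDyadic} (h : SigPre.refines a b) :
    SigPre.refines (imageDot f a) (imageDot f b) := by
  rcases imageDot_cases b with hb | ⟨n, m, hb, hne⟩
  · change rRefines _ (imageDot f b).1
    rw [hb]
    exact trivial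
  have h : rRefines a.1 (leanIv n m) := hb ▸ h
  obtain ⟨n', m', ha, -⟩ := eq_leanIv_of_rRefines h
  rw [ha] at h
  have hsub := qualAncestors_mono (f := f) h
  change rRefines (imageDot f a).1 (imageDot f b).1
  obtain ⟨hbl, hbr, -⟩ := imagePair_spec hc hne
  obtain ⟨hal, har, -⟩ := imagePair_spec hc (hne.mono hsub)
  rw [imageDot_of_nonempty ha (hne.mono hsub), imageDot_of_nonempty hb hne, rRefines_leanIv_iff,
    hal, har, hbl, hbr]
  exact ⟨imageLeft_mono hsub hne, imageRight_mono hsub hne⟩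

lemma mapsTo_imageDot (hc : Continuous f) (d : IsLeanDyadic) :
    MapsTo f (dotSet d.1) (dotSet (imageDot f d).1) := by
  rcases imageDot_cases d with hd | ⟨n, m, hd, hne⟩
  · rw [hd]
    exact mapsTo_univ _ _
  rw [imageDot_of_nonempty hd hne, hd, dotSet_leanIv, dotSet_leanIv, (imagePair_spec hc hne).1,
    (imagePair_spec hc hne).2.1]
  exact fun x hx => ⟨(imageLeft_lt_lowerOn hc hne).le.trans (lowerOn_le hc hx),
    (le_upperOn hc hx).trans (upperOn_lt_imageRight hc hne).le⟩

lemma exists_upperOn_sub_lowerOn_le (hc : Continuous f) (x : SigPre.Pt) (t : ℕ) :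
    ∃ n k s, (x.1 n).1 = leanIv k s ∧ t ≤ s ∧
      upperOn f k s - lowerOn f k s ≤ 1 / 2 ^ (t + 1) := by
  obtain ⟨δ, hδ, hδf⟩ := Metric.continuousAt_iff.1 hc.continuousAt (1 / 2 ^ (t + 2))
    (by positivity)
  obtain ⟨t₁, ht₁⟩ := exists_two_div_two_pow_lt hδ
  obtain ⟨n, k, s, hn, hs⟩ := scalesUnbounded_of_isPoint x.2 (max t t₁)
  refine ⟨n, k, s, hn, le_of_max_le_left hs, ?_⟩
  have hr : ∀ z ∈ dotSet (leanIv k s), |f z - f (rhoSig x)| ≤ 1 / 2 ^ (t + 2) := by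
    intro z hz
    have hzx := abs_sub_le_of_mem_dotSet hz (hn ▸ rhoSig_mem x n)
    have := two_div_two_pow_le (le_of_max_le_right hs)
    exact (hδf (by rw [Real.dist_eq]; linarith)).le
  calc upperOn f k s - lowerOn f k s ≤ 2 * (1 / 2 ^ (t + 2)) := upperOn_sub_lowerOn_le hr
  _ = 1 / 2 ^ (t + 1) := by rw [pow_succ 2 (t + 1)]; field_simp

lemma scalesUnbounded_imageDot (hc : Continuous f) (x : SigPre.Pt) :
    ScalesUnbounded fun n => imageDot f (x.1 n) := by
  intro t
  obtain ⟨n, k, s, hn, hts, hosc⟩ := exists_upperOn_sub_lowerOn_le hc x t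
  have hq : Qualifies f k s :=
    hosc.trans (by gcongr; exact le_self_pow₀ one_le_two t.succ_ne_zero)
  have hks : (k, s) ∈ qualAncestors f k s :=
    mem_qualAncestors.2 ⟨RPre.refines_refl (leanIv k s), hq⟩
  have hscale : t ≤ roughScale f k s := Nat.le_findGreatest hts hosc
  exact ⟨n, _, _, imageDot_of_nonempty hn ⟨_, hks⟩, hscale.trans
    ((roughScale_le_imageScale hks).trans (imagePair_spec hc ⟨_, hks⟩).2.2)⟩

end Construction

end LeanDyadic

/-- classical: a real function uniformly continuous on every closed
bounded interval is represented by a refinement morphism from `σ_ℝ` to `σ_ℝ`. -/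
theorem stmt17 (f : ℝ → ℝ) (hf : ∀ a b : ℝ, UniformContinuousOn f (Set.Icc a b)) :
    ∃ g : RefMorphism SigPre SigPre, ∀ x : SigPre.Pt,
      rhoSig (g.pointMap x) = f (rhoSig x) := by
  have hc : Continuous f := continuous_iff_continuousAt.2 fun x =>
    (hf (x - 1) (x + 1)).continuousOn.continuousAt (Icc_mem_nhds (by linarith) (by linarith))
  exact LeanDyadic.exists_refMorphism_of_mapsTo f (LeanDyadic.imageDot f)
    (fun _ _ => LeanDyadic.imageDot_mono hc) (LeanDyadic.mapsTo_imageDot hc)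
    (LeanDyadic.scalesUnbounded_imageDot hc)
end

section
/- (In classical logic.) Let 𝒱 be a spraid and let f be a map from the point set of 𝒱 to the natural reals ℛ that is continuous with respect to the natural topologies and respects ≡ (x ≡ y implies f(x) ≡_ℝ f(y)). Then there is a refinement morphism g from 𝒱 to σ_ℝ such that f(x) ≡_ℝ g(x) for all points x of 𝒱. -/
/-!
Put `φ = ρ ∘ f`; it is continuous and `≡`-invariant. Fix an enumeration `e` of the dots. An even
level `L` is admissible at a dot `a` if some `b ⊒ a` with `L ≤ e b` has `φ(b̂)` inside the open
middle half of a lean dyadic interval of level `L`, and `g a` is that interval for the largest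
admissible level (the levels are bounded since `a` has finitely many ancestors in a spraid), or
`(-∞,∞)` if there is none. The middle half pins the interval down at each level and, for levels
two apart, puts the finer interval inside the coarser one, so `g` respects `⊑`. Along a point `x`,
continuity of `φ` squeezes `φ(x̂ₘ)` into middle halves of ever deeper levels while `e xₘ → ∞`, so
the `g xₘ` shrink to `φ x` and form a point. As `φ x` lies in every `g xₘ` and every dot of
`f x`, `g x ≡ f x`; and by `≡`-invariance of `φ`, `g pₙ # g qₙ` forces `p # q`.
-/

def rMem (t : ℝ) : RDot → Prop
  | none => True
  | some I => (I.1.1 : ℝ) ≤ t ∧ t ≤ I.1.2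

def rWidthLt (d : RDot) (δ : ℝ) : Prop := ∃ I, d = some I ∧ (I.1.2 : ℝ) - I.1.1 < δ

lemma exists_rMem : ∀ d : RDot, ∃ t, rMem t d
  | none => ⟨0, trivial⟩
  | some I => ⟨I.1.1, le_rfl, by exact_mod_cast I.2.le⟩

lemma rApart_iff_forall_rMem {a b : RDot} : rApart a b ↔ ∀ t, rMem t a → ¬ rMem t b := by
  rcases a with _ | I
  · obtain ⟨t, ht⟩ := exists_rMem b
    exact iff_of_false (fun h => h) fun h => h t trivial ht
  rcases b with _ | J
  · obtain ⟨t, ht⟩ := exists_rMem (some I)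
    exact iff_of_false (fun h => h) fun h => h t ht trivial
  simp only [rApart, rMem]
  constructor
  · rintro (h | h) t ⟨hI1, hI2⟩ ⟨hJ1, hJ2⟩
    · have : (J.1.2 : ℝ) < I.1.1 := by exact_mod_cast h
      linarith
    · have : (I.1.2 : ℝ) < J.1.1 := by exact_mod_cast h
      linarith
  · intro h
    by_contra! hIJ
    have h1 : (I.1.1 : ℝ) ≤ J.1.2 := by exact_mod_cast hIJ.1
    have h2 : (J.1.1 : ℝ) ≤ I.1.2 := by exact_mod_cast hIJ.2
    have hI : (I.1.1 : ℝ) ≤ I.1.2 := by exact_mod_cast I.2.le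
    have hJ : (J.1.1 : ℝ) ≤ J.1.2 := by exact_mod_cast J.2.le
    exact h (max I.1.1 J.1.1) ⟨le_max_left _ _, max_le hI h2⟩
      ⟨le_max_right _ _, max_le h1 hJ⟩

lemma rRefines_iff_forall_rMem {a b : RDot} : rRefines a b ↔ ∀ t, rMem t a → rMem t b := by
  rcases b with _ | J
  · exact iff_of_true (by cases a <;> trivial) fun _ _ => trivial
  rcases a with _ | I
  · refine iff_of_false (fun h => h) fun h => ?_
    have := (h (J.1.2 + 1) trivial).2
    linarith
  simp only [rRefines, rMem]
  constructor
  · rintro ⟨h1, h2⟩ t ⟨hI1, hI2⟩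
    exact ⟨le_trans (by exact_mod_cast h1) hI1, le_trans hI2 (by exact_mod_cast h2)⟩
  · intro h
    have hI : (I.1.1 : ℝ) ≤ I.1.2 := by exact_mod_cast I.2.le
    exact ⟨by exact_mod_cast (h _ ⟨le_rfl, hI⟩).1,
      by exact_mod_cast (h _ ⟨hI, le_rfl⟩).2⟩

lemma rMem_of_rRefines {a b : RDot} {t : ℝ} (hab : rRefines a b) (ht : rMem t a) : rMem t b :=
  rRefines_iff_forall_rMem.1 hab t ht

lemma rWidthLt_of_rRefines {a b : RDot} {δ : ℝ} (hab : rRefines a b) (hb : rWidthLt b δ) :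
    rWidthLt a δ := by
  obtain ⟨J, rfl, hJ⟩ := hb
  rcases a with _ | I
  · exact absurd hab id
  obtain ⟨h1, h2⟩ := hab
  have h1' : (J.1.1 : ℝ) ≤ I.1.1 := by exact_mod_cast h1
  have h2' : (I.1.2 : ℝ) ≤ J.1.2 := by exact_mod_cast h2
  exact ⟨I, rfl, by linarith⟩

lemma abs_sub_lt_of_rWidthLt {d : RDot} {δ s t : ℝ} (hd : rWidthLt d δ) (hs : rMem s d)
    (ht : rMem t d) : |s - t| < δ := by
  obtain ⟨I, rfl, hI⟩ := hd
  rw [abs_lt]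
  constructor <;> linarith [hs.1, hs.2, ht.1, ht.2]

lemma exists_not_rWidthLt : ∀ d : RDot, ∃ δ > 0, ¬ rWidthLt d δ
  | none => ⟨1, one_pos, fun ⟨_, h, _⟩ => nomatch h⟩
  | some I => by
    refine ⟨I.1.2 - I.1.1, sub_pos.2 (by exact_mod_cast I.2), ?_⟩
    rintro ⟨_, ⟨⟩, hw⟩
    exact lt_irrefl _ hw

lemma not_rWidthLt_zero (d : RDot) : ¬ rWidthLt d 0 := by
  rintro ⟨I, -, hI⟩
  have : (I.1.1 : ℝ) < I.1.2 := by exact_mod_cast I.2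
  linarith

lemma exists_rApart_or_rApart_of_rWidthLt {a b : RDot} (hab : rApart a b) :
    ∃ δ > 0, ∀ d, rWidthLt d δ → rApart d a ∨ rApart d b := by
  rcases a with _ | I
  · exact hab.elim
  rcases b with _ | J
  · exact hab.elim
  refine ⟨max ((I.1.1 : ℝ) - J.1.2) ((J.1.1 : ℝ) - I.1.2), ?_, fun d hd => ?_⟩
  · rcases hab with h | h
    · exact lt_max_of_lt_left (sub_pos.2 (by exact_mod_cast h))
    · exact lt_max_of_lt_right (sub_pos.2 (by exact_mod_cast h))
  by_contra! h
  obtain ⟨s, hsd, hsI⟩ : ∃ s, rMem s d ∧ rMem s (some I) := by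
    by_contra! h'
    exact h.1 (rApart_iff_forall_rMem.2 h')
  obtain ⟨t, htd, htJ⟩ : ∃ t, rMem t d ∧ rMem t (some J) := by
    by_contra! h'
    exact h.2 (rApart_iff_forall_rMem.2 h')
  have hgap : max ((I.1.1 : ℝ) - J.1.2) ((J.1.1 : ℝ) - I.1.2) ≤ |s - t| :=
    max_le (by linarith [le_abs_self (s - t), hsI.1, htJ.2])
      (by linarith [neg_abs_le (s - t), hsI.2, htJ.1])
  linarith [abs_sub_lt_of_rWidthLt hd hsd htd]

lemma RPre.isPoint_of_exists_rWidthLt {d : ℕ → RDot} (hmono : ∀ n, rRefines (d (n + 1)) (d n))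
    (hwidth : ∀ δ > 0, ∃ n, rWidthLt (d n) δ) : RPre.IsPoint d where
  mono := hmono
  shrink n := by
    obtain ⟨δ, hδ, hn⟩ := exists_not_rWidthLt (d n)
    obtain ⟨m, hm⟩ := hwidth δ hδ
    refine ⟨max m n, RPre.refines_of_le hmono (le_max_right m n), fun h => hn ?_⟩
    exact h ▸ rWidthLt_of_rRefines (RPre.refines_of_le hmono (le_max_left m n)) hm
  decides a b hab := by
    obtain ⟨δ, hδ, hsep⟩ := exists_rApart_or_rApart_of_rWidthLt hab
    obtain ⟨m, hm⟩ := hwidth δ hδ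
    exact ⟨m, hsep _ hm⟩

lemma left_add_le_right (w : RPre.Pt) {ε : ℝ} (hε : ∀ n, ¬ rWidthLt (w.1 n) ε) {n k : ℕ}
    {I J : { pq : ℚ × ℚ // pq.1 < pq.2 }} (hI : w.1 n = some I) (hJ : w.1 k = some J) :
    (J.1.1 : ℝ) + ε ≤ I.1.2 := by
  have hKI : rRefines (w.1 (max n k)) (some I) :=
    hI ▸ RPre.refines_of_le w.2.mono (le_max_left n k)
  have hKJ : rRefines (w.1 (max n k)) (some J) :=
    hJ ▸ RPre.refines_of_le w.2.mono (le_max_right n k)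
  rcases hK : w.1 (max n k) with _ | K
  · rw [hK] at hKI; exact hKI.elim
  rw [hK] at hKI hKJ
  have h1 : (J.1.1 : ℝ) ≤ K.1.1 := by exact_mod_cast hKJ.1
  have h2 : (K.1.2 : ℝ) ≤ I.1.2 := by exact_mod_cast hKI.2
  have h3 : ε ≤ (K.1.2 : ℝ) - K.1.1 := not_lt.1 fun h => hε _ ⟨K, hK, h⟩
  linarith

lemma rhoR_add_le (w : RPre.Pt) {ε : ℝ} (hε : ∀ n, ¬ rWidthLt (w.1 n) ε) {n : ℕ}
    {I : { pq : ℚ × ℚ // pq.1 < pq.2 }} (hI : w.1 n = some I) : rhoR w + ε ≤ I.1.2 := by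
  have : rhoR w ≤ I.1.2 - ε := by
    refine csSup_le ⟨_, n, I, hI, rfl⟩ ?_
    rintro _ ⟨k, J, hJ, rfl⟩
    linarith [left_add_le_right w hε hI hJ]
  linarith

lemma rhoR_rMem (w : RPre.Pt) (n : ℕ) : rMem (rhoR w) (w.1 n) := by
  rcases hI : w.1 n with _ | I
  · trivial
  have hw := fun k => not_rWidthLt_zero (w.1 k)
  refine ⟨le_csSup ⟨I.1.2, ?_⟩ ⟨n, I, hI, rfl⟩, by linarith [rhoR_add_le w hw hI]⟩
  rintro _ ⟨k, J, hJ, rfl⟩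
  linarith [left_add_le_right w hw hI hJ]

lemma exists_rWidthLt (w : RPre.Pt) {ε : ℝ} (hε : 0 < ε) : ∃ n, rWidthLt (w.1 n) ε := by
  -- otherwise every dot contains `[ρ w, ρ w + ε]`, so `w` cannot decide two apart dots inside it
  by_contra! hw
  have hmem : ∀ n u, rhoR w ≤ u → u ≤ rhoR w + ε → rMem u (w.1 n) := by
    intro n u hu hu'
    rcases hI : w.1 n with _ | I
    · trivial
    have hρ := rhoR_rMem w n
    rw [hI] at hρ
    exact ⟨hρ.1.trans hu, hu'.trans (rhoR_add_le w hw hI)⟩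
  obtain ⟨a, ha, ha'⟩ := exists_rat_btwn (lt_add_of_pos_right (rhoR w) hε)
  obtain ⟨b, hab, hb⟩ := exists_rat_btwn ha'
  have hab' : a < b := by exact_mod_cast hab
  let A : RDot := some ⟨(a - 1, a), by linarith⟩
  let B : RDot := some ⟨(b, b + 1), by linarith⟩
  have hAa : rMem a A := ⟨by push_cast; linarith, le_rfl⟩
  have hBb : rMem b B := ⟨le_rfl, by push_cast; linarith⟩
  obtain ⟨m, hm | hm⟩ := w.2.decides A B (Or.inr hab')
  · exact rApart_iff_forall_rMem.1 hm a (hmem m a ha.le (by linarith)) hAa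
  · exact rApart_iff_forall_rMem.1 hm b (hmem m b (by linarith) hb.le) hBb

lemma pApart_of_rhoR_ne {w y : RPre.Pt} (h : rhoR w ≠ rhoR y) : RPre.pApart w y := by
  have hδ : 0 < |rhoR w - rhoR y| / 2 := by positivity
  obtain ⟨n, hn⟩ := exists_rWidthLt w hδ
  obtain ⟨k, hk⟩ := exists_rWidthLt y hδ
  refine ⟨max n k, rApart_iff_forall_rMem.2 fun t hw hy => ?_⟩
  have h1 := abs_sub_lt_of_rWidthLt
    (rWidthLt_of_rRefines (RPre.refines_of_le w.2.mono (le_max_left n k)) hn) hw (rhoR_rMem w _)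
  have h2 := abs_sub_lt_of_rWidthLt
    (rWidthLt_of_rRefines (RPre.refines_of_le y.2.mono (le_max_right n k)) hk) hy (rhoR_rMem y _)
  rw [abs_sub_comm] at h1
  linarith [abs_sub_le (rhoR w) t (rhoR y)]

lemma rhoR_eq_of_pEquiv {w y : RPre.Pt} (h : RPre.pEquiv w y) : rhoR w = rhoR y :=
  not_not.1 fun hne => h (pApart_of_rhoR_ne hne)

lemma continuous_rhoR : Continuous rhoR := by
  refine continuous_def.2 fun U hU x hx y => ?_
  by_cases hxy : rhoR y = rhoR x
  · obtain ⟨ε, hε, hball⟩ := Metric.isOpen_iff.1 hU _ hx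
    obtain ⟨m, hm⟩ := exists_rWidthLt y hε
    refine Or.inr ⟨m, fun z ⟨j, hj⟩ => hball ?_⟩
    rw [Metric.mem_ball, Real.dist_eq, ← hxy]
    exact abs_sub_lt_of_rWidthLt hm (rMem_of_rRefines hj.1 (rhoR_rMem z j)) (rhoR_rMem y m)
  · exact Or.inl (pApart_of_rhoR_ne hxy)

namespace PreNaturalSpace

open Filter

variable {V : Type}

lemma IsPoint.finite_preimage_singleton {P : PreNaturalSpace V} {p : ℕ → V} (hp : P.IsPoint p)
    (b : V) : (p ⁻¹' {b}).Finite := by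
  rcases (p ⁻¹' {b}).eq_empty_or_nonempty with h | ⟨m, rfl : p m = b⟩
  · simp [h]
  obtain ⟨j, hj, hne⟩ := hp.shrink m
  refine (Set.finite_Iio j).subset fun k (hk : p k = p m) => ?_
  by_contra hjk
  exact hne (P.refines_antisymm _ _ hj (hk ▸ P.refines_of_le hp.mono (not_lt.1 hjk)))

lemma IsPoint.tendsto_cofinite {P : PreNaturalSpace V} {p : ℕ → V} (hp : P.IsPoint p) :
    Tendsto p atTop cofinite :=
  Nat.cofinite_eq_atTop ▸ Tendsto.cofinite_of_finite_preimage_singleton fun b =>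
    (hp.finite_preimage_singleton b).to_subtype

lemma IsPoint.restrict {P : PreNaturalSpace V} {S : Set V} {p : ℕ → S}
    (hp : P.IsPoint fun n => (p n).1) : (P.restrict S).IsPoint p where
  mono := hp.mono
  shrink n := (hp.shrink n).imp fun _ h => ⟨h.1, fun he => h.2 (congrArg Subtype.val he)⟩
  decides a b hab := hp.decides a b hab

variable (P : PreNaturalSpace V)

lemma hatSet_mono {a b : V} (hab : P.refines a b) : P.hatSet a ⊆ P.hatSet b :=
  fun z hz => P.begins_mono z.2 hab hz

lemma mem_hatSet (x : P.Pt) (m : ℕ) : x ∈ P.hatSet (x.1 m) := x.2.shrink m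

lemma eventually_hatSet_subset {U : Set P.Pt} (hU : IsOpen U) {x : P.Pt} (hx : x ∈ U) :
    ∀ᶠ m in atTop, P.hatSet (x.1 m) ⊆ U := by
  rcases hU x hx x with ⟨n, hn⟩ | ⟨m, hm⟩
  · exact absurd hn (P.apart_irrefl _)
  · exact eventually_atTop.2
      ⟨m, fun k hk => (P.hatSet_mono (P.refines_of_le x.2.mono hk)).trans hm⟩

end PreNaturalSpace

/-- The open middle half of `leanIv n L`, in coordinates scaled by `2 ^ L`. -/
def leanCore (L : ℕ) (n : ℤ) : Set ℝ :=
  {t | (n : ℝ) + 1 / 2 < 2 ^ L * t ∧ 2 ^ L * t < n + 3 / 2}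

lemma isOpen_leanCore (L : ℕ) (n : ℤ) : IsOpen (leanCore L n) :=
  (isOpen_lt continuous_const (continuous_const.mul continuous_id)).inter
    (isOpen_lt (continuous_const.mul continuous_id) continuous_const)

lemma eq_of_mem_leanCore {L : ℕ} {n n' : ℤ} {t : ℝ} (h : t ∈ leanCore L n)
    (h' : t ∈ leanCore L n') : n = n' := by
  have h1 : (n : ℝ) < n' + 1 := by linarith [h.1, h'.2]
  have h2 : (n' : ℝ) < n + 1 := by linarith [h.2, h'.1]
  have h1' : n < n' + 1 := by exact_mod_cast h1
  have h2' : n' < n + 1 := by exact_mod_cast h2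
  omega

lemma rMem_leanIv_iff {n : ℤ} {L : ℕ} {t : ℝ} :
    rMem t (leanIv n L) ↔ (n : ℝ) ≤ 2 ^ L * t ∧ 2 ^ L * t ≤ n + 2 := by
  have hL : (0 : ℝ) < 2 ^ L := by positivity
  simp only [leanIv, rMem]
  push_cast
  rw [div_le_iff₀' hL, le_div_iff₀' hL]

lemma rMem_leanIv_of_mem_leanCore {n : ℤ} {L : ℕ} {t : ℝ} (h : t ∈ leanCore L n) :
    rMem t (leanIv n L) :=
  rMem_leanIv_iff.2 ⟨by linarith [h.1], by linarith [h.2]⟩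

lemma leanIv_refines_of_mem_leanCore {n n' : ℤ} {L L' : ℕ} {t : ℝ} (h : t ∈ leanCore L n)
    (h' : t ∈ leanCore L' n') (hL : L + 2 ≤ L') : rRefines (leanIv n' L') (leanIv n L) := by
  refine rRefines_iff_forall_rMem.2 fun s hs => rMem_leanIv_iff.2 ?_
  rw [rMem_leanIv_iff] at hs
  have hpow : 4 * (2 : ℝ) ^ L ≤ 2 ^ L' :=
    calc 4 * (2 : ℝ) ^ L = 2 ^ (L + 2) := by ring
      _ ≤ 2 ^ L' := pow_le_pow_right₀ one_le_two hL
  have hfar : (2 : ℝ) ^ L' * |s - t| < 3 / 2 := by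
    rw [← abs_of_pos (show (0 : ℝ) < 2 ^ L' by positivity), ← abs_mul, abs_lt, mul_sub]
    constructor <;> linarith [h'.1, h'.2]
  have hnear : (2 : ℝ) ^ L * |s - t| < 3 / 8 := by
    nlinarith [abs_nonneg (s - t)]
  rw [← abs_of_pos (show (0 : ℝ) < 2 ^ L by positivity), ← abs_mul, abs_lt, mul_sub] at hnear
  constructor <;> linarith [h.1, h.2]

lemma exists_even_mem_leanCore (r : ℝ) (T : ℕ) :
    ∃ L, T ≤ L ∧ Even L ∧ ∃ n, r ∈ leanCore L n := by
  have core_of_ne : ∀ L : ℕ, (∀ k : ℤ, 2 ^ L * r ≠ k + 1 / 2) → ∃ n, r ∈ leanCore L n :=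
    fun L h => ⟨⌊2 ^ L * r - 1 / 2⌋,
      lt_of_le_of_ne (by linarith [Int.floor_le (2 ^ L * r - 1 / 2)]) fun h' => h _ h'.symm,
      by linarith [Int.lt_floor_add_one (2 ^ L * r - 1 / 2)]⟩
  by_cases h : ∃ k : ℤ, 2 ^ (2 * T) * r = k + 1 / 2
  swap
  · exact ⟨2 * T, by omega, even_two_mul T, core_of_ne _ (not_exists.1 h)⟩
  obtain ⟨k, hk⟩ := h
  -- if `2 ^ (2T) * r` is a half-integer, then `2 ^ (2T + 2) * r` is an integer
  refine ⟨2 * T + 2, by omega, ⟨T + 1, by ring⟩, core_of_ne _ fun j hj => ?_⟩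
  have h4 : (2 : ℝ) ^ (2 * T + 2) * r = 4 * (2 ^ (2 * T) * r) := by ring
  have : ((2 * j : ℤ) : ℝ) = 8 * k + 3 := by push_cast; linarith
  have : 2 * j = 8 * k + 3 := by exact_mod_cast this
  omega

lemma exists_rWidthLt_leanIv {δ : ℝ} (hδ : 0 < δ) :
    ∃ T, ∀ L ≥ T, ∀ n, rWidthLt (leanIv n L) δ := by
  obtain ⟨T, hT⟩ := pow_unbounded_of_one_lt (2 / δ) one_lt_two
  refine ⟨T, fun L hL n => ⟨_, rfl, ?_⟩⟩
  have hL' : (0 : ℝ) < 2 ^ L := by positivity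
  have : 2 / δ < 2 ^ L := hT.trans_le (pow_le_pow_right₀ one_le_two hL)
  push_cast
  rw [← sub_div, add_sub_cancel_left, div_lt_iff₀ hL']
  rwa [div_lt_iff₀ hδ, mul_comm] at this

namespace PreNaturalSpace

open Filter

variable {V : Type} (P : PreNaturalSpace V) (φ : P.Pt → ℝ) (e : V → ℕ)

def dyadicLevels (a : V) : Set ℕ :=
  {L | Even L ∧ ∃ b, P.refines a b ∧ L ≤ e b ∧ ∃ n, φ '' P.hatSet b ⊆ leanCore L n}

noncomputable def dyadicLevel (a : V) : ℕ := sSup (P.dyadicLevels φ e a)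

lemma dyadicLevels_anti {a b : V} (hab : P.refines a b) :
    P.dyadicLevels φ e b ⊆ P.dyadicLevels φ e a :=
  fun _ ⟨hL, c, hbc, hc⟩ => ⟨hL, c, P.refines_trans _ _ _ hab hbc, hc⟩

lemma bddAbove_dyadicLevels (hfin : ∀ a, {b | P.refines a b}.Finite) (a : V) :
    BddAbove (P.dyadicLevels φ e a) :=
  ⟨(hfin a).toFinset.sup e, fun _ ⟨_, _, hab, hL, _⟩ =>
    hL.trans (Finset.le_sup ((hfin a).mem_toFinset.2 hab))⟩

lemma dyadicLevel_mem (hfin : ∀ a, {b | P.refines a b}.Finite) {a : V}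
    (h : (P.dyadicLevels φ e a).Nonempty) : P.dyadicLevel φ e a ∈ P.dyadicLevels φ e a :=
  Nat.sSup_mem h (P.bddAbove_dyadicLevels φ e hfin a)

lemma le_dyadicLevel (hfin : ∀ a, {b | P.refines a b}.Finite) {a : V} {L : ℕ}
    (h : L ∈ P.dyadicLevels φ e a) : L ≤ P.dyadicLevel φ e a :=
  le_csSup (P.bddAbove_dyadicLevels φ e hfin a) h

lemma exists_leanCore_of_mem_dyadicLevels {a : V} {L : ℕ} (h : L ∈ P.dyadicLevels φ e a) :
    ∃ n, φ '' P.hatSet a ⊆ leanCore L n := by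
  obtain ⟨-, b, hab, -, n, hn⟩ := h
  exact ⟨n, (Set.image_mono (P.hatSet_mono hab)).trans hn⟩

open Classical in
noncomputable def dyadicDot (a : V) : RDot :=
  if h : P.dyadicLevel φ e a ∈ P.dyadicLevels φ e a then
    leanIv (P.exists_leanCore_of_mem_dyadicLevels φ e h).choose (P.dyadicLevel φ e a)
  else none

lemma dyadicDot_spec {a : V} (h : P.dyadicLevel φ e a ∈ P.dyadicLevels φ e a) :
    ∃ n, φ '' P.hatSet a ⊆ leanCore (P.dyadicLevel φ e a) n ∧
      P.dyadicDot φ e a = leanIv n (P.dyadicLevel φ e a) :=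
  ⟨_, (P.exists_leanCore_of_mem_dyadicLevels φ e h).choose_spec, dif_pos h⟩

lemma dyadicDot_of_not_mem {a : V} (h : P.dyadicLevel φ e a ∉ P.dyadicLevels φ e a) :
    P.dyadicDot φ e a = none :=
  dif_neg h

lemma dyadicDot_mem_isLeanDyadic (a : V) : P.dyadicDot φ e a ∈ IsLeanDyadic := by
  by_cases h : P.dyadicLevel φ e a ∈ P.dyadicLevels φ e a
  · obtain ⟨n, -, hn⟩ := P.dyadicDot_spec φ e h
    exact Or.inr ⟨n, _, hn⟩
  · exact Or.inl (P.dyadicDot_of_not_mem φ e h)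

lemma rMem_dyadicDot {a : V} {z : P.Pt} (hz : z ∈ P.hatSet a) :
    rMem (φ z) (P.dyadicDot φ e a) := by
  by_cases h : P.dyadicLevel φ e a ∈ P.dyadicLevels φ e a
  · obtain ⟨n, hn, heq⟩ := P.dyadicDot_spec φ e h
    rw [heq]
    exact rMem_leanIv_of_mem_leanCore (hn ⟨z, hz, rfl⟩)
  · rw [P.dyadicDot_of_not_mem φ e h]
    trivial

lemma dyadicDot_refines (hinh : P.AllDotsInhabited) (hfin : ∀ a, {b | P.refines a b}.Finite)
    {a b : V} (hab : P.refines a b) : rRefines (P.dyadicDot φ e a) (P.dyadicDot φ e b) := by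
  by_cases hb : P.dyadicLevel φ e b ∈ P.dyadicLevels φ e b
  swap
  · rw [P.dyadicDot_of_not_mem φ e hb]
    cases P.dyadicDot φ e a <;> trivial
  have hba := P.dyadicLevels_anti φ e hab hb
  have ha := P.dyadicLevel_mem φ e hfin ⟨_, hba⟩
  obtain ⟨na, hna, hga⟩ := P.dyadicDot_spec φ e ha
  obtain ⟨nb, hnb, hgb⟩ := P.dyadicDot_spec φ e hb
  obtain ⟨p, hp, hpa⟩ := hinh a
  have hza := hna ⟨⟨p, hp⟩, hpa, rfl⟩
  have hzb := hnb ⟨⟨p, hp⟩, P.hatSet_mono hab hpa, rfl⟩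
  rw [hga, hgb]
  rcases (P.le_dyadicLevel φ e hfin hba).eq_or_lt with heq | hlt
  · rw [heq] at hzb ⊢
    rw [eq_of_mem_leanCore hza hzb]
    exact rRefines_iff_forall_rMem.2 fun _ => id
  · obtain ⟨i, hi⟩ := ha.1
    obtain ⟨j, hj⟩ := hb.1
    exact leanIv_refines_of_mem_leanCore hzb hza (by omega)

lemma exists_eventually_mem_dyadicLevels (hφ : Continuous φ) (he : Function.Injective e)
    (x : P.Pt) (T : ℕ) :
    ∃ L, T ≤ L ∧ ∀ᶠ m in atTop, L ∈ P.dyadicLevels φ e (x.1 m) := by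
  obtain ⟨L, hTL, hL, n, hn⟩ := exists_even_mem_leanCore (φ x) T
  refine ⟨L, hTL, ?_⟩
  have hcore := P.eventually_hatSet_subset ((isOpen_leanCore L n).preimage hφ) hn
  -- a point passes through infinitely many dots, and only finitely many have index below `L`
  have hlarge : ∀ᶠ m in atTop, L ≤ e (x.1 m) :=
    (Nat.cofinite_eq_atTop ▸ he.tendsto_cofinite.comp x.2.tendsto_cofinite).eventually_ge_atTop L
  filter_upwards [hcore, hlarge] with m hm hLm
  exact ⟨hL, x.1 m, P.refines_refl _, hLm, n, Set.image_subset_iff.2 hm⟩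

lemma exists_rWidthLt_dyadicDot (hfin : ∀ a, {b | P.refines a b}.Finite) (hφ : Continuous φ)
    (he : Function.Injective e) (x : P.Pt) {δ : ℝ} (hδ : 0 < δ) :
    ∃ m, rWidthLt (P.dyadicDot φ e (x.1 m)) δ := by
  obtain ⟨T, hT⟩ := exists_rWidthLt_leanIv hδ
  obtain ⟨L, hTL, hL⟩ := P.exists_eventually_mem_dyadicLevels φ e hφ he x T
  obtain ⟨m, hm⟩ := hL.exists
  obtain ⟨n, -, heq⟩ := P.dyadicDot_spec φ e (P.dyadicLevel_mem φ e hfin ⟨L, hm⟩)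
  exact ⟨m, heq ▸ hT _ (hTL.trans (P.le_dyadicLevel φ e hfin hm)) n⟩

lemma isPoint_dyadicDot (hinh : P.AllDotsInhabited) (hfin : ∀ a, {b | P.refines a b}.Finite)
    (hφ : Continuous φ) (he : Function.Injective e) (x : P.Pt) :
    RPre.IsPoint fun m => P.dyadicDot φ e (x.1 m) :=
  RPre.isPoint_of_exists_rWidthLt (fun m => P.dyadicDot_refines φ e hinh hfin (x.2.mono m))
    fun _ hδ => P.exists_rWidthLt_dyadicDot φ e hfin hφ he x hδ

theorem exists_refMorphism_sigPre_rMem (hinh : P.AllDotsInhabited)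
    (hfin : ∀ a, {b | P.refines a b}.Finite) {φ : P.Pt → ℝ} (hφ : Continuous φ)
    (hφ_equiv : ∀ x y, P.pEquiv x y → φ x = φ y) :
    ∃ g : RefMorphism P SigPre, ∀ x k, rMem (φ x) ((g.pointMap x).1 k).1 := by
  obtain ⟨e, he⟩ := (countable_iff_exists_injective V).mp P.countable'
  refine ⟨⟨fun a => ⟨P.dyadicDot φ e a, P.dyadicDot_mem_isLeanDyadic φ e a⟩,
    fun p hp => ?_, fun p q hp hq => ?_⟩, fun x k => P.rMem_dyadicDot φ e (P.mem_hatSet x k)⟩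
  · exact (P.isPoint_dyadicDot φ e hinh hfin hφ he ⟨p, hp⟩).restrict
  · rintro ⟨n, hn⟩
    by_contra hpq
    have hφpq := hφ_equiv ⟨p, hp⟩ ⟨q, hq⟩ hpq
    exact rApart_iff_forall_rMem.1 hn _ (P.rMem_dyadicDot φ e (P.mem_hatSet ⟨p, hp⟩ n))
      (hφpq ▸ P.rMem_dyadicDot φ e (P.mem_hatSet ⟨q, hq⟩ n))

end PreNaturalSpace

/-- classical: a continuous `≡`-respecting map from a spraid `𝒱` to
the natural reals `ℛ` is represented, up to `≡_ℝ`, by a refinement morphism from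
`𝒱` to `σ_ℝ`. -/
theorem stmt19 {V : Type} (P : PreNaturalSpace V) (hP : P.IsNaturalSpace)
    (hsp : P.IsSpraid) (f : P.Pt → RPre.Pt) (hf : Continuous f)
    (hresp : ∀ x y, P.pEquiv x y → RPre.pEquiv (f x) (f y)) :
    ∃ g : RefMorphism P SigPre, ∀ x : P.Pt,
      ¬ ∃ k, rApart ((f x).1 k) (((g.pointMap x).1 k) : RDot) := by
  obtain ⟨-, -, hfin, -⟩ := hsp.1
  obtain ⟨g, hg⟩ := P.exists_refMorphism_sigPre_rMem hP.2 hfin (continuous_rhoR.comp hf)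
    fun x y hxy => rhoR_eq_of_pEquiv (hresp x y hxy)
  exact ⟨g, fun x ⟨k, hk⟩ => rApart_iff_forall_rMem.1 hk _ (rhoR_rMem (f x) k) (hg x k)⟩
end
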